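/- arXiv:1810.00497 — 5 statements merged into one kernel-verified Lean document; each statement's English description precedes it below -/
import Mathlib

section
/- Let X be a compact metric space and T : X → X a continuous injective map. If (a_1, …, a_n) is an IN-tuple for T, then each a_i belongs to T(X), hence has a unique T-preimage, and the tuple (T⁻¹(a_1), …, T⁻¹(a_n)) is again an IN-tuple for T. -/
/-!
A coordinate `a i` of an IN-tuple is approximated by `T^[m] x` for some time `m ≥ 1` of an
independence set, so it lies in the closure of `T(X)`, which is closed because `T` is a closed
map. For the preimages `b i`, shrink a neighbourhood `U i` of `b i` to the open neighbourhood
`V i = (T '' (U i)ᶜ)ᶜ` of `a i`; since `T ⁻¹' V i ⊆ U i`, an independence set `J` for `V`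
yields the independence set `{m - 1 | m ∈ J, m ≥ 1}` for `U`, which loses at most one element.
-/

/-- A finite set `J` of nonnegative integers is an independence set (of times) for the
tuple of sets `A` and the map `T`. -/
def IsIndepTimeSet {X : Type*} (T : X → X) {k : ℕ} (A : Fin k → Set X) (J : Finset ℕ) : Prop :=
  ∀ s : ℕ → Fin k, ∃ x : X, ∀ i ∈ J, T^[i] x ∈ A (s i)

/-- `x` is an IN-tuple for `T`: every tuple of open neighbourhoods of its coordinates has
independence sets of arbitrarily large finite cardinality. -/
def IsINTuple {X : Type*} [TopologicalSpace X] (T : X → X) {k : ℕ} (x : Fin k → X) : Prop :=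
  ∀ U : Fin k → Set X, (∀ j, IsOpen (U j)) → (∀ j, x j ∈ U j) →
    ∀ p : ℕ, ∃ J : Finset ℕ, p ≤ J.card ∧ IsIndepTimeSet T U J

open Finset Set

lemma Finset.exists_map_addRightEmbedding_one_subset (J : Finset ℕ) :
    ∃ J' : Finset ℕ, J'.map (addRightEmbedding 1) ⊆ J ∧ #J ≤ #J' + 1 := by
  refine ⟨(J.erase 0).image (· - 1), ?_, ?_⟩
  · intro m hm
    simp only [mem_map, mem_image, mem_erase, addRightEmbedding_apply] at hm
    obtain ⟨_, ⟨k, ⟨hk0, hkJ⟩, rfl⟩, rfl⟩ := hm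
    rwa [Nat.sub_add_cancel (Nat.pos_of_ne_zero hk0)]
  · rw [card_image_of_injOn fun x hx y hy hxy => by simp_all; omega]
    have := pred_card_le_card_erase (a := 0) (s := J)
    omega

section IndepTimeSet

variable {X : Type*} {T : X → X} {k : ℕ} {A B : Fin k → Set X} {J J' : Finset ℕ}

lemma IsIndepTimeSet.subset (hJ : IsIndepTimeSet T A J) (h : J' ⊆ J) : IsIndepTimeSet T A J' :=
  fun s => (hJ s).imp fun _ hx i hi => hx i (h hi)

lemma IsIndepTimeSet.mono (hJ : IsIndepTimeSet T A J) (h : ∀ j, A j ⊆ B j) :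
    IsIndepTimeSet T B J :=
  fun s => (hJ s).imp fun _ hx i hi => h _ (hx i hi)

lemma IsIndepTimeSet.preimage_of_map_succ
    (hJ : IsIndepTimeSet T A (J.map (addRightEmbedding 1))) :
    IsIndepTimeSet T (fun j => T ⁻¹' A j) J := by
  intro s
  obtain ⟨x, hx⟩ := hJ (fun m => s (m - 1))
  refine ⟨x, fun i hi => ?_⟩
  simpa [Function.iterate_succ_apply'] using hx (i + 1) (mem_map_of_mem _ hi)

end IndepTimeSet

section INTuple

variable {X : Type*} [TopologicalSpace X] {T : X → X} {n : ℕ} {a : Fin n → X}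

lemma IsINTuple.mem_closure_range (h : IsINTuple T a) (i : Fin n) :
    a i ∈ closure (range T) := by
  classical
  rw [mem_closure_iff]
  intro U hU haU
  obtain ⟨J, hJcard, hJ⟩ := h (Function.update (fun _ => univ) i U)
    (fun j => by by_cases hj : j = i <;> simp [hj, hU])
    (fun j => by by_cases hj : j = i <;> simp [hj, haU]) 2
  obtain ⟨m, hmJ, hm0⟩ := exists_mem_ne hJcard 0
  obtain ⟨x, hx⟩ := hJ fun _ => i
  obtain ⟨l, rfl⟩ := Nat.exists_eq_succ_of_ne_zero hm0
  have hxU : T^[l + 1] x ∈ U := by simpa using hx _ hmJ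
  exact ⟨_, hxU, T^[l] x, (Function.iterate_succ_apply' T l x).symm⟩

lemma IsINTuple.of_apply_eq (hT : IsClosedMap T) (hinj : Function.Injective T)
    (h : IsINTuple T a) {b : Fin n → X} (hb : ∀ i, T (b i) = a i) : IsINTuple T b := by
  intro U hU hbU p
  have hV : ∀ j, IsOpen (T '' (U j)ᶜ)ᶜ := fun j =>
    (hT _ (hU j).isClosed_compl).isOpen_compl
  have haV : ∀ j, a j ∈ (T '' (U j)ᶜ)ᶜ := by
    rintro j ⟨y, hyU, hTy⟩
    exact hyU (hinj (hTy.trans (hb j).symm) ▸ hbU j)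
  have hVU : ∀ j, T ⁻¹' (T '' (U j)ᶜ)ᶜ ⊆ U j := fun j y hy => by
    by_contra hyU
    exact hy ⟨y, hyU, rfl⟩
  obtain ⟨J, hJcard, hJ⟩ := h _ hV haV (p + 1)
  obtain ⟨J', hJ'J, hJ'card⟩ := J.exists_map_addRightEmbedding_one_subset
  exact ⟨J', by omega, ((hJ.subset hJ'J).preimage_of_map_succ).mono hVU⟩

end INTuple

/-- If `T` is continuous and injective and `(a 1, …, a n)` is an IN-tuple for `T`, then
each `a i` lies in `T(X)` and has a unique `T`-preimage, and the tuple of preimages is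
again an IN-tuple for `T`. -/
theorem statement5 {X : Type*} [MetricSpace X] [CompactSpace X]
    (T : X → X) (hT : Continuous T) (hinj : Function.Injective T)
    {n : ℕ} (a : Fin n → X) (h : IsINTuple T a) :
    (∀ i, a i ∈ Set.range T) ∧ (∀ i, ∃! y, T y = a i) ∧
      ∀ b : Fin n → X, (∀ i, T (b i) = a i) → IsINTuple T b := by
  have hclosed : IsClosedMap T := hT.isClosedMap
  have hrange : ∀ i, a i ∈ Set.range T := fun i =>
    hclosed.isClosed_range.closure_eq ▸ h.mem_closure_range i
  refine ⟨hrange, fun i => ?_, fun b hb => h.of_apply_eq hclosed hinj hb⟩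
  obtain ⟨y, hy⟩ := hrange i
  exact ⟨y, hy, fun z hz => hinj (hz.trans hy.symm)⟩
end

section
/- Let X be a compact metric space and T : X → X a continuous map. If (x_1, …, x_n) is an IN-tuple for T, then each coordinate x_i is a nonwandering point of T. -/
open scoped ENNReal

/-- `x` is a nonwandering point of `T`. -/
def NonwanderingPt {X : Type*} [TopologicalSpace X] (T : X → X) (x : X) : Prop :=
  ∀ U : Set X, IsOpen U → x ∈ U → ∃ n : ℕ, 1 ≤ n ∧ (T^[n] '' U ∩ U).Nonempty

/-!
An independence set for neighbourhoods `U_j` of the coordinates, read along the constant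
choice `s ≡ i`, gives one orbit visiting `U_i` at every time of the set. Two distinct visit
times `a < b` exhibit a return of `U_i` to itself after `b - a` steps.
-/

theorem iterate_image_inter_nonempty_of_lt {X : Type*} {T : X → X} {U : Set X} {y : X}
    {a b : ℕ} (hab : a < b) (ha : T^[a] y ∈ U) (hb : T^[b] y ∈ U) :
    (T^[b - a] '' U ∩ U).Nonempty := by
  refine ⟨T^[b] y, ⟨T^[a] y, ha, ?_⟩, hb⟩
  rw [← Function.iterate_add_apply, Nat.sub_add_cancel hab.le]

theorem IsIndepTimeSet.exists_forall_mem {X : Type*} {T : X → X} {k : ℕ} {A : Fin k → Set X}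
    {J : Finset ℕ} (hJ : IsIndepTimeSet T A J) (i : Fin k) :
    ∃ y : X, ∀ j ∈ J, T^[j] y ∈ A i :=
  hJ fun _ => i

theorem IsINTuple.exists_orbit_visits {X : Type*} [TopologicalSpace X] {T : X → X} {k : ℕ}
    {x : Fin k → X} (hx : IsINTuple T x) (i : Fin k) {U : Set X} (hU : IsOpen U)
    (hxU : x i ∈ U) (p : ℕ) :
    ∃ J : Finset ℕ, p ≤ J.card ∧ ∃ y : X, ∀ j ∈ J, T^[j] y ∈ U := by
  classical
  let V : Fin k → Set X := Function.update (fun _ => Set.univ) i U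
  have hV_open : ∀ j, IsOpen (V j) := by
    intro j
    rcases eq_or_ne j i with rfl | hj
    · simpa [V] using hU
    · simp [V, hj]
  have hV_mem : ∀ j, x j ∈ V j := by
    intro j
    rcases eq_or_ne j i with rfl | hj
    · simpa [V] using hxU
    · simp [V, hj]
  obtain ⟨J, hcard, hJ⟩ := hx V hV_open hV_mem p
  obtain ⟨y, hy⟩ := hJ.exists_forall_mem i
  exact ⟨J, hcard, y, by simpa [V] using hy⟩

theorem statement6_general {X : Type*} [MetricSpace X]
    (T : X → X) {n : ℕ} (x : Fin n → X) (h : IsINTuple T x) :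
    ∀ i, NonwanderingPt T (x i) := by
  intro i U hU hxU
  obtain ⟨J, hcard, y, hy⟩ := h.exists_orbit_visits i hU hxU 2
  have hJ : 1 < J.card := hcard
  have hne : J.Nonempty := Finset.card_pos.mp (by omega)
  have hlt : J.min' hne < J.max' hne := Finset.min'_lt_max'_of_card J hJ
  exact ⟨_, Nat.sub_pos_of_lt hlt,
    iterate_image_inter_nonempty_of_lt hlt (hy _ (J.min'_mem hne)) (hy _ (J.max'_mem hne))⟩

/-- Every coordinate of an IN-tuple is a nonwandering point. -/
theorem statement6 {X : Type*} [MetricSpace X] [CompactSpace X]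
    (T : X → X) (hT : Continuous T) {n : ℕ} (x : Fin n → X) (h : IsINTuple T x) :
    ∀ i, NonwanderingPt T (x i) :=
  statement6_general T x h
end

section
/- A nondegenerate metric continuum C is a Cook continuum if and only if no two different nondegenerate subcontinua of C are comparable by continuous maps; that is, if and only if whenever K and L are nondegenerate subcontinua of C and there exists a continuous surjection from K onto L, then K = L. -/
open scoped ENNReal

/-- The defining property of a Cook continuum: every continuous map from a subcontinuum
`K` of `C` into `C` is either constant or the identity on `K`. -/
def CookProperty (C : Type*) [TopologicalSpace C] : Prop :=
  ∀ K : Set C, IsCompact K → IsConnected K →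
    ∀ f : K → C, Continuous f → (∃ c, ∀ x, f x = c) ∨ ∀ x : K, f x = (x : C)

/-!
If no two distinct nondegenerate subcontinua are comparable, let `f : K → C` be a nonconstant
map on a subcontinuum. Its image is a nondegenerate subcontinuum, so `f` maps `K` onto `K`, and
the same holds for every subcontinuum `D ⊆ K` on which `f` is not constant. Given `q` with
`c = f q ≠ f c`, choose a closed neighbourhood `V` of `c` missing the fibre `f⁻¹(c)`. By
boundary bumping, the component of `q` in `K \ int V` reaches `∂V`. Since `f q = c` lies
outside `K \ int V`, `f` cannot map the closure of that component onto itself, so `f` is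
constantly `c` there, contradicting `f⁻¹(c) ∩ V = ∅`. Hence every value of `f` is a fixed
point, and since `f` is onto, `f` is the identity.
-/

open Set Topology

def SubcontinuaIncomparable (C : Type*) [TopologicalSpace C] : Prop :=
  ∀ K L : Set C, IsCompact K → IsConnected K → K.Nontrivial →
    IsCompact L → IsConnected L → L.Nontrivial →
    ∀ f : K → C, Continuous f → Set.range f = L → K = L

section BoundaryBumping

variable {X : Type*} [TopologicalSpace X] [CompactSpace X] [T2Space X]

theorem exists_isClopen_mem_subset_of_connectedComponent_subset {x : X} {U : Set X}
    (hU : IsOpen U) (h : connectedComponent x ⊆ U) :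
    ∃ V, IsClopen V ∧ x ∈ V ∧ V ⊆ U := by
  have : Nonempty {s : Set X // IsClopen s ∧ x ∈ s} :=
    ⟨⟨univ, isClopen_univ, mem_univ x⟩⟩
  obtain ⟨⟨V, hV, hxV⟩, hVU⟩ := exists_subset_nhds_of_compactSpace
    (V := fun s : {s : Set X // IsClopen s ∧ x ∈ s} ↦ (s : Set X))
    (fun s t ↦ ⟨⟨s ∩ t, s.2.1.inter t.2.1, s.2.2, t.2.2⟩,
      inter_subset_left, inter_subset_right⟩)
    (fun s ↦ s.2.1.isClosed)
    (fun y hy ↦ hU.mem_nhds (h (connectedComponent_eq_iInter_isClopen x ▸ hy)))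
  exact ⟨V, hV, hxV, hVU⟩

theorem IsClosed.connectedComponentIn_inter_frontier_nonempty [PreconnectedSpace X]
    {A : Set X} (hA : IsClosed A) (hA_ne : A ≠ univ) {q : X} (hq : q ∈ A) :
    (connectedComponentIn A q ∩ frontier A).Nonempty := by
  by_contra hD
  rw [not_nonempty_iff_eq_empty, ← disjoint_iff_inter_eq_empty] at hD
  have : CompactSpace A := isCompact_iff_compactSpace.mp hA.isCompact
  have hsub : connectedComponent (⟨q, hq⟩ : A) ⊆ (↑) ⁻¹' interior A := fun x hx ↦ by
    have hxD : (x : X) ∈ connectedComponentIn A q :=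
      connectedComponentIn_eq_image hq ▸ mem_image_of_mem _ hx
    exact self_sdiff_frontier A ▸ ⟨x.2, disjoint_left.1 hD hxD⟩
  obtain ⟨V, hV, hqV, hVint⟩ := exists_isClopen_mem_subset_of_connectedComponent_subset
    (isOpen_interior.preimage continuous_subtype_val) hsub
  obtain ⟨W, hW, rfl⟩ := isOpen_induced_iff.mp hV.isOpen
  have hVX : IsClopen (A ∩ W) := by
    refine ⟨Subtype.image_preimage_coe A W ▸
      hA.isClosedEmbedding_subtypeVal.isClosedMap _ hV.isClosed, ?_⟩
    -- `A ∩ W` lies in `interior A`, where it agrees with the open set `interior A ∩ W`.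
    have hAW : A ∩ W ⊆ interior A := by
      have := image_mono (f := Subtype.val) hVint
      rw [Subtype.image_preimage_coe, Subtype.image_preimage_coe] at this
      exact this.trans inter_subset_right
    rw [show A ∩ W = interior A ∩ W from subset_antisymm (subset_inter hAW inter_subset_right)
      (inter_subset_inter_left W interior_subset)]
    exact isOpen_interior.inter hW
  exact hA_ne (eq_univ_of_univ_subset (hVX.eq_univ ⟨q, hq, hqV⟩ ▸ inter_subset_left))

end BoundaryBumping

section SelfMaps

variable {X : Type*} [TopologicalSpace X] [CompactSpace X] [T2Space X] [PreconnectedSpace X]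
  {g : X → X}

theorem apply_apply_eq_of_forall_image_subsingleton_or_eq (hg : Continuous g)
    (hD : ∀ D : Set X, IsClosed D → IsConnected D → (g '' D).Subsingleton ∨ g '' D = D)
    (q : X) : g (g q) = g q := by
  set c := g q
  by_contra hc
  obtain ⟨V, hVc, hVcl, hVF⟩ := exists_mem_nhds_isClosed_subset
    ((isClosed_eq hg continuous_const).isOpen_compl.mem_nhds (show g c ≠ c from hc))
  set A := (interior V)ᶜ
  have hcA : c ∉ A := not_not.2 (mem_interior_iff_mem_nhds.2 hVc)
  have hqA : q ∈ A := fun hqV ↦ hVF (interior_subset hqV) rfl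
  have hAF : ∀ x ∈ frontier A, g x ≠ c := fun x hx ↦ hVF <| by
    rw [frontier_compl] at hx
    exact closure_minimal interior_subset hVcl (frontier_subset_closure hx)
  have hAcl : IsClosed A := isOpen_interior.isClosed_compl
  obtain ⟨x, hxD, hxA⟩ :=
    hAcl.connectedComponentIn_inter_frontier_nonempty (fun hA ↦ hcA (hA ▸ mem_univ c)) hqA
  -- The closure is taken only so that `hD` applies.
  set D := closure (connectedComponentIn A q)
  have hqD : q ∈ D := subset_closure (mem_connectedComponentIn hqA)
  rcases hD D isClosed_closure (isConnected_connectedComponentIn_iff.2 hqA).closure with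
    hsub | heq
  · exact hAF x hxA (hsub (mem_image_of_mem g (subset_closure hxD)) (mem_image_of_mem g hqD))
  · exact hcA (hAcl.closure_subset_iff.2 (connectedComponentIn_subset A q)
      (heq.subset (mem_image_of_mem g hqD)))

theorem eq_id_of_forall_image_subsingleton_or_eq (hg : Continuous g)
    (hD : ∀ D : Set X, IsClosed D → IsConnected D → (g '' D).Subsingleton ∨ g '' D = D)
    (hg_nc : ¬ ∃ c, ∀ x, g x = c) : g = id := by
  funext x
  have hnt : ¬ (g '' univ).Subsingleton := fun hs ↦
    hg_nc ⟨g x, fun y ↦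
      hs (mem_image_of_mem g (mem_univ y)) (mem_image_of_mem g (mem_univ x))⟩
  have hsurj : g '' univ = univ :=
    (hD univ isClosed_univ ⟨⟨x, mem_univ x⟩, isPreconnected_univ⟩).resolve_left hnt
  obtain ⟨q, -, rfl⟩ : x ∈ g '' univ := hsurj.ge (mem_univ x)
  exact apply_apply_eq_of_forall_image_subsingleton_or_eq hg hD q

end SelfMaps

section Continua

variable {C : Type*} [TopologicalSpace C]

theorem CookProperty.subcontinuaIncomparable (h : CookProperty C) :
    SubcontinuaIncomparable C := by
  intro K L hK hKc _ _ _ hL f hf hfL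
  subst hfL
  rcases h K hK hKc f hf with ⟨c, hc⟩ | hid
  · obtain ⟨_, ⟨x, rfl⟩, _, ⟨y, rfl⟩, hxy⟩ := hL
    exact absurd ((hc x).trans (hc y).symm) hxy
  · rw [show f = Subtype.val from funext hid, Subtype.range_coe]

theorem SubcontinuaIncomparable.range_eq_range (h : SubcontinuaIncomparable C)
    {Z : Type*} [TopologicalSpace Z] [CompactSpace Z] [ConnectedSpace Z] {e : Z → C}
    (he : IsEmbedding e) {φ : Z → C} (hφ : Continuous φ) (hφ_nt : (range φ).Nontrivial) :
    range φ = range e := by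
  have he_nt : (range e).Nontrivial := by
    obtain ⟨_, ⟨a, rfl⟩, _, ⟨b, rfl⟩, hab⟩ := hφ_nt
    exact ⟨e a, mem_range_self a, e b, mem_range_self b,
      he.injective.ne (ne_of_apply_ne φ hab)⟩
  let Φ := he.toHomeomorph
  exact (h (range e) (range φ) (isCompact_range he.continuous)
    (isConnected_range he.continuous) he_nt (isCompact_range hφ) (isConnected_range hφ) hφ_nt
    (φ ∘ Φ.symm) (hφ.comp Φ.symm.continuous) (Φ.symm.surjective.range_comp φ)).symm

theorem SubcontinuaIncomparable.image_subsingleton_or_eq (h : SubcontinuaIncomparable C)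
    {K : Set C} [CompactSpace K] {g : K → K} (hg : Continuous g) {D : Set K} (hD : IsClosed D)
    (hDc : IsConnected D) : (g '' D).Subsingleton ∨ g '' D = D := by
  refine or_iff_not_imp_left.2 fun hnt ↦ ?_
  have : CompactSpace D := isCompact_iff_compactSpace.mp hD.isCompact
  have : ConnectedSpace D := Subtype.connectedSpace hDc
  have hrange := h.range_eq_range (IsEmbedding.subtypeVal.comp IsEmbedding.subtypeVal)
    (continuous_subtype_val.comp (hg.comp continuous_subtype_val))
    (by
      rw [range_comp, range_comp, Subtype.range_coe]
      exact (not_subsingleton_iff.1 hnt).image Subtype.val_injective)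
  rw [range_comp, range_comp, range_comp, Subtype.range_coe] at hrange
  exact Subtype.val_injective.image_injective hrange

theorem SubcontinuaIncomparable.cookProperty [T2Space C] (h : SubcontinuaIncomparable C) :
    CookProperty C := by
  intro K hK hKc f hf
  have : CompactSpace K := isCompact_iff_compactSpace.mp hK
  have : ConnectedSpace K := Subtype.connectedSpace hKc
  refine or_iff_not_imp_left.2 fun hf_nc ↦ ?_
  have hf_nt : (range f).Nontrivial := by
    refine not_subsingleton_iff.1 fun hs ↦ hf_nc ?_
    obtain ⟨x₀⟩ := hKc.nonempty.to_subtype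
    exact ⟨f x₀, fun x ↦ hs (mem_range_self x) (mem_range_self x₀)⟩
  have hfK : range f = K :=
    (h.range_eq_range IsEmbedding.subtypeVal hf hf_nt).trans Subtype.range_coe
  have hg := hf.codRestrict fun x ↦ hfK ▸ mem_range_self x
  have hid := eq_id_of_forall_image_subsingleton_or_eq hg
    (fun D hD hDc ↦ h.image_subsingleton_or_eq hg hD hDc)
    (fun ⟨c, hc⟩ ↦ hf_nc ⟨c, fun x ↦ congrArg Subtype.val (hc x)⟩)
  exact fun x ↦ congrArg Subtype.val (congrFun hid x)

end Continua

theorem statement8_general (C : Type*) [MetricSpace C] :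
    CookProperty C ↔
      ∀ K L : Set C, IsCompact K → IsConnected K → K.Nontrivial →
        IsCompact L → IsConnected L → L.Nontrivial →
        ∀ f : K → C, Continuous f → Set.range f = L → K = L :=
  ⟨CookProperty.subcontinuaIncomparable, SubcontinuaIncomparable.cookProperty⟩

/-- A nondegenerate metric continuum is a Cook continuum iff no two different
nondegenerate subcontinua of it are comparable by continuous maps. -/
theorem statement8 (C : Type*) [MetricSpace C] [CompactSpace C] [ConnectedSpace C]
    [Nontrivial C] :
    CookProperty C ↔
      ∀ K L : Set C, IsCompact K → IsConnected K → K.Nontrivial →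
        IsCompact L → IsConnected L → L.Nontrivial →
        ∀ f : K → C, Continuous f → Set.range f = L → K = L :=
  statement8_general C
end

section
/- Let C be a compact metric space with at least two points which is rigid for continuous maps. Then C is connected, and no subset of C is homeomorphic to the square [0,1] × [0,1]. -/
/-!
If a space is disconnected, a continuous map through `Bool` swaps two points, which is impossible
for a rigid space. If two distinct points `x`, `y` of a completely regular space are joined by a
path `γ`, composing `γ` with an Urysohn function `u` (`u x = 0`, `u y = 1`) gives a continuous
self-map fixing `x` and `y`, so rigidity forces it to be the identity and `γ` to be onto. The
bottom edge of an embedded square is such a path, but it misses the top edge.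
-/

open unitInterval

def IsContinuouslyRigid (X : Type*) [TopologicalSpace X] : Prop :=
  ∀ f : X → X, Continuous f → (∃ c, ∀ x, f x = c) ∨ f = id

namespace IsContinuouslyRigid

variable {X : Type*} [TopologicalSpace X]

theorem eq_of_swap (hX : IsContinuouslyRigid X) {f : X → X} (hf : Continuous f) {x y : X}
    (hxy : f x = y) (hyx : f y = x) : x = y := by
  rcases hX f hf with ⟨c, hc⟩ | rfl
  · rw [← hyx, ← hxy, hc, hc]
  · exact hxy

theorem preconnectedSpace (hX : IsContinuouslyRigid X) : PreconnectedSpace X := by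
  refine preconnectedSpace_of_forall_constant fun b hb x y ↦ ?_
  by_contra hne
  let swap : Bool → X := fun c ↦ if c = b x then y else x
  have hswap : Continuous (swap ∘ b) := continuous_of_discreteTopology.comp hb
  have hxy : x = y := hX.eq_of_swap hswap (by simp [swap]) (by simp [swap, Ne.symm hne])
  exact hne (hxy ▸ rfl)

theorem range_eq_univ_of_path [CompletelyRegularSpace X] [T1Space X]
    (hX : IsContinuouslyRigid X) {γ : I → X} (hγ : Continuous γ) (h01 : γ 0 ≠ γ 1) :
    Set.range γ = Set.univ := by
  obtain ⟨u, hu, hu0, hu1⟩ := CompletelyRegularSpace.completely_regular (γ 0) {γ 1}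
    isClosed_singleton (Set.notMem_singleton_iff.mpr h01)
  have hu1 : u (γ 1) = 1 := hu1 rfl
  rcases hX (γ ∘ u) (hγ.comp hu) with ⟨c, hc⟩ | hid
  · refine absurd ?_ h01
    calc γ 0 = γ (u (γ 0)) := by rw [hu0]
      _ = γ (u (γ 1)) := (hc _).trans (hc _).symm
      _ = γ 1 := by rw [hu1]
  · exact Set.eq_univ_of_forall fun z ↦ ⟨u z, congrFun hid z⟩

end IsContinuouslyRigid

theorem statement10_general (C : Type*) [MetricSpace C] [Nontrivial C]
    (hrigid : ∀ f : C → C, Continuous f → (∃ c, ∀ x, f x = c) ∨ f = id) :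
    ConnectedSpace C ∧
      ∀ S : Set C,
        ¬ Nonempty (↥S ≃ₜ (↥(Set.Icc (0 : ℝ) 1) × ↥(Set.Icc (0 : ℝ) 1))) := by
  have hC : IsContinuouslyRigid C := hrigid
  have := hC.preconnectedSpace
  refine ⟨⟨inferInstance⟩, fun S ⟨e⟩ ↦ ?_⟩
  have he : Function.Injective fun p ↦ (e.symm p : C) :=
    Subtype.val_injective.comp e.symm.injective
  let edge : I → C := fun t ↦ e.symm (t, 0)
  have hedge : Set.range edge = Set.univ :=
    hC.range_eq_univ_of_path (by fun_prop) fun h ↦ zero_ne_one (congrArg Prod.fst (he h))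
  obtain ⟨t, ht⟩ := hedge.symm ▸ Set.mem_univ (e.symm (0, 1) : C)
  exact zero_ne_one (congrArg Prod.snd (he ht))

/-- A compact metric space with at least two points which is rigid for continuous maps is
connected and contains no subset homeomorphic to the square `[0,1] × [0,1]`. -/
theorem statement10 (C : Type*) [MetricSpace C] [CompactSpace C] [Nontrivial C]
    (hrigid : ∀ f : C → C, Continuous f → (∃ c, ∀ x, f x = c) ∨ f = id) :
    ConnectedSpace C ∧
      ∀ S : Set C,
        ¬ Nonempty (↥S ≃ₜ (↥(Set.Icc (0 : ℝ) 1) × ↥(Set.Icc (0 : ℝ) 1))) :=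
  statement10_general C hrigid
end

section
/- For every nondegenerate metric continuum 𝒞 there exist a compact metric space X₁, a continuous map T : X₁ → X₁, a subset 𝒞₀ ⊆ X₁ homeomorphic to 𝒞, and a point x₁ ∈ X₁ such that: the points x_n := T^{n−1}(x₁), n ≥ 1, are pairwise distinct; X₁ is the disjoint union of 𝒞₀ and {x_n : n ≥ 1}; T restricted to 𝒞₀ is the identity; the topological entropy h(T) = 0; and the supremum topological sequence entropy h*(T) = ∞. -/
set_option linter.unusedSectionVars false
set_option linter.unusedVariables false
set_option maxHeartbeats 1000000


open scoped ENNReal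

/-- The minimal cardinality of a subcover of the finite family `V` of subsets of `X`
which still covers the whole space. -/
noncomputable def coverNum {X : Type*} (V : Finset (Set X)) : ℕ :=
  sInf {n : ℕ | ∃ W : Finset (Set X), W ⊆ V ∧ W.card = n ∧ ⋃₀ (W : Set (Set X)) = Set.univ}

/-- The common refinement `⋁_{i=0}^{n-1} (g i)⁻¹ U` of the preimages of the finite
family `U` under the maps `g 0, …, g (n-1)`. -/
noncomputable def preRefine {X : Type*} (g : ℕ → X → X) (n : ℕ) (U : Finset (Set X)) :
    Finset (Set X) :=
  letI : DecidableEq (Set X) := Classical.decEq _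
  (Finset.univ : Finset (Fin n → {u : Set X // u ∈ U})).image
    fun c => ⋂ i : Fin n, g (i : ℕ) ⁻¹' ((c i : Set X))

/-- `U` is a finite open cover of `X`. -/
def IsFiniteOpenCover {X : Type*} [TopologicalSpace X] (U : Finset (Set X)) : Prop :=
  (∀ u ∈ U, IsOpen u) ∧ ⋃₀ (U : Set (Set X)) = Set.univ

/-- `h^a(T, U)`: the topological sequence entropy of `T` along the sequence `a`
with respect to the cover `U`. -/
noncomputable def seqEntropyOfCover {X : Type*} [TopologicalSpace X] (T : X → X)
    (a : ℕ → ℕ) (U : Finset (Set X)) : ℝ≥0∞ :=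
  Filter.limsup
    (fun n : ℕ =>
      ENNReal.ofReal (Real.log (coverNum (preRefine (fun i => T^[a i]) n U) : ℝ) / (n : ℝ)))
    Filter.atTop

/-- `h^a(T)`: the topological sequence entropy of `T` along the sequence `a`. -/
noncomputable def seqEntropy {X : Type*} [TopologicalSpace X] (T : X → X) (a : ℕ → ℕ) : ℝ≥0∞ :=
  ⨆ (U : Finset (Set X)) (_ : IsFiniteOpenCover U), seqEntropyOfCover T a U

/-- `h*(T)`: the supremum topological sequence entropy of `T`, the supremum of `h^a(T)`
over all strictly increasing sequences `a` of nonnegative integers. -/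
noncomputable def supSeqEntropy {X : Type*} [TopologicalSpace X] (T : X → X) : ℝ≥0∞ :=
  ⨆ (a : ℕ → ℕ) (_ : StrictMono a), seqEntropy T a

/-- The topological entropy of `T`, i.e. the sequence entropy along `a(i) = i`. -/
noncomputable def topEntropy {X : Type*} [TopologicalSpace X] (T : X → X) : ℝ≥0∞ :=
  seqEntropy T id

namespace S13

variable {X : Type*} {g : ℕ → X → X} {n : ℕ} {U : Finset (Set X)}

theorem mem_preRefine (c : Fin n → {u : Set X // u ∈ U}) :
    (⋂ i : Fin n, g (i : ℕ) ⁻¹' ((c i : Set X))) ∈ preRefine g n U := by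
  letI : DecidableEq (Set X) := Classical.decEq _
  unfold preRefine
  exact Finset.mem_image_of_mem _ (Finset.mem_univ c)

theorem mem_preRefine_iff {A : Set X} :
    A ∈ preRefine g n U ↔ ∃ c : Fin n → {u : Set X // u ∈ U},
      A = ⋂ i : Fin n, g (i : ℕ) ⁻¹' ((c i : Set X)) := by
  letI : DecidableEq (Set X) := Classical.decEq _
  unfold preRefine
  rw [Finset.mem_image]
  constructor
  · rintro ⟨c, -, rfl⟩; exact ⟨c, rfl⟩
  · rintro ⟨c, rfl⟩; exact ⟨c, Finset.mem_univ c, rfl⟩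

theorem sUnion_preRefine (hU : ⋃₀ (U : Set (Set X)) = Set.univ) :
    ⋃₀ ((preRefine g n U : Finset (Set X)) : Set (Set X)) = Set.univ := by
  apply Set.eq_univ_of_forall
  intro x
  have hc : ∀ i : Fin n, ∃ u : {u : Set X // u ∈ U}, g (i : ℕ) x ∈ (u : Set X) := by
    intro i
    have : g (i : ℕ) x ∈ ⋃₀ (U : Set (Set X)) := by rw [hU]; trivial
    obtain ⟨u, hu, hxu⟩ := this
    exact ⟨⟨u, hu⟩, hxu⟩
  choose c hcx using hc
  exact ⟨_, mem_preRefine c, Set.mem_iInter.2 hcx⟩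

theorem coverNum_le_card {W : Finset (Set X)} {V : Finset (Set X)} (hWV : W ⊆ V)
    (hcov : ⋃₀ (W : Set (Set X)) = Set.univ) : coverNum V ≤ W.card :=
  Nat.sInf_le ⟨W, hWV, rfl, hcov⟩

theorem exists_min_subcover {V : Finset (Set X)} (hV : ⋃₀ (V : Set (Set X)) = Set.univ) :
    ∃ W : Finset (Set X), W ⊆ V ∧ W.card = coverNum V ∧ ⋃₀ (W : Set (Set X)) = Set.univ := by
  have hne : {n : ℕ | ∃ W : Finset (Set X), W ⊆ V ∧ W.card = n ∧
      ⋃₀ (W : Set (Set X)) = Set.univ}.Nonempty := ⟨V.card, V, le_refl V, rfl, hV⟩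
  obtain ⟨W, h1, h2, h3⟩ := Nat.sInf_mem hne
  exact ⟨W, h1, h2, h3⟩

/-- ε-chains exist in preconnected metric spaces. -/
theorem exists_chain {α : Type*} [MetricSpace α] [PreconnectedSpace α] {ε : ℝ} (hε : 0 < ε)
    (x y : α) :
    ∃ L : ℕ, ∃ f : ℕ → α, f 0 = x ∧ (∀ k, L ≤ k → f k = y) ∧
      ∀ k, dist (f k) (f (k + 1)) ≤ ε := by
  set S : Set α := {z | ∃ L : ℕ, ∃ f : ℕ → α, f 0 = x ∧ (∀ k, L ≤ k → f k = z) ∧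
      ∀ k, dist (f k) (f (k + 1)) ≤ ε} with hS
  have extend : ∀ z w, z ∈ S → dist z w ≤ ε → w ∈ S := by
    rintro z w ⟨L, f, hf0, hfL, hstep⟩ hzw
    refine ⟨L + 1, fun k => if k ≤ L then f k else w, by simp [hf0], ?_, ?_⟩
    · intro k hk
      have : ¬ k ≤ L := by omega
      simp [this]
    · intro k
      rcases lt_trichotomy k L with h | h | h
      · have h1 : k ≤ L := le_of_lt h
        have h2 : k + 1 ≤ L := h
        simp only [h1, h2, if_true]
        exact hstep k
      · subst h
        have h2 : ¬ (k + 1 ≤ k) := by omega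
        simp only [le_refl, if_true, h2, if_false]
        rw [hfL k le_rfl]
        exact hzw
      · have h1 : ¬ k ≤ L := by omega
        have h2 : ¬ k + 1 ≤ L := by omega
        simp only [h1, h2, if_false]
        simp
        exact le_of_lt hε
  have hopen : IsOpen S := by
    rw [Metric.isOpen_iff]
    rintro z hz
    exact ⟨ε, hε, fun w hw => extend z w hz (le_of_lt (by rw [dist_comm]; exact Metric.mem_ball.mp hw))⟩
  have hclosed : IsClosed S := by
    rw [← isOpen_compl_iff, Metric.isOpen_iff]
    intro z hz
    refine ⟨ε, hε, fun w hw hwS => hz ?_⟩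
    exact extend w z hwS (le_of_lt (Metric.mem_ball.mp hw))
  have hne : S.Nonempty := ⟨x, 0, fun _ => x, rfl, fun _ _ => rfl, by simp [hε.le]⟩
  have : S = Set.univ := IsClopen.eq_univ ⟨hclosed, hopen⟩ hne
  have : y ∈ S := this ▸ Set.mem_univ y
  exact this



section Gadgets

/-- Inverse of a cumulative (monotone) sequence. -/
def invCum (A : ℕ → ℕ) (t : ℕ) : ℕ := Nat.findGreatest (fun s => A s ≤ t) t

theorem invCum_le {A : ℕ → ℕ} (h0 : A 0 = 0) (t : ℕ) : A (invCum A t) ≤ t := by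
  have : (fun s => A s ≤ t) (Nat.findGreatest (fun s => A s ≤ t) t) :=
    Nat.findGreatest_spec (P := fun s => A s ≤ t) (m := 0) (Nat.zero_le t) (by simp [h0])
  exact this

theorem lt_invCum_succ {A : ℕ → ℕ} (hA : ∀ s, s ≤ A s) (t : ℕ) : t < A (invCum A t + 1) := by
  by_contra h
  push_neg at h
  have h2 : invCum A t + 1 ≤ t := le_trans (hA _) h
  have h3 : invCum A t + 1 ≤ Nat.findGreatest (fun s => A s ≤ t) t :=
    Nat.le_findGreatest h2 h
  unfold invCum at h3
  omega

theorem invCum_eq {A : ℕ → ℕ} (hmono : Monotone A) (hA : ∀ s, s ≤ A s) (h0 : A 0 = 0)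
    {j t : ℕ} (h1 : A j ≤ t) (h2 : t < A (j + 1)) : invCum A t = j := by
  have hle := invCum_le h0 t
  have hlt := lt_invCum_succ hA t
  by_contra hne
  rcases Nat.lt_or_ge (invCum A t) j with h | h
  · have : A (invCum A t + 1) ≤ A j := hmono h
    omega
  · have hj : j < invCum A t := by omega
    have : A (j + 1) ≤ A (invCum A t) := hmono hj
    omega

/-- base-m digits -/
def dig (m π i : ℕ) : ℕ := π / m ^ i % m

theorem dig_lt {m : ℕ} (hm : 0 < m) (π i : ℕ) : dig m π i < m :=
  Nat.mod_lt _ hm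

theorem dig_succ (m π i : ℕ) : dig m π (i + 1) = dig m (π / m) i := by
  unfold dig
  rw [Nat.div_div_eq_div_mul, pow_succ, mul_comm (m ^ i) m, ← Nat.div_div_eq_div_mul]

theorem dig_inj {m : ℕ} (hm : 2 ≤ m) :
    ∀ n π π', π < m ^ n → π' < m ^ n → (∀ i < n, dig m π i = dig m π' i) → π = π' := by
  intro n
  induction n with
  | zero => intro π π' h1 h2 _; simp [Nat.lt_one_iff] at h1 h2; omega
  | succ n ih =>
    intro π π' h1 h2 hdig
    have e0 : π % m = π' % m := by
      have := hdig 0 (Nat.succ_pos n)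
      unfold dig at this
      simpa using this
    have ediv : π / m = π' / m := by
      apply ih
      · exact Nat.div_lt_of_lt_mul (by rwa [← pow_succ'] )
      · exact Nat.div_lt_of_lt_mul (by rwa [← pow_succ'] )
      · intro i hi
        rw [← dig_succ, ← dig_succ]
        exact hdig (i + 1) (by omega)
    have h3 := Nat.div_add_mod π m
    have h4 := Nat.div_add_mod π' m
    rw [ediv] at h3
    omega

end Gadgets

section Construction

variable (𝒞 : Type u) [MetricSpace 𝒞] [CompactSpace 𝒞] [ConnectedSpace 𝒞] [Nontrivial 𝒞]

noncomputable def p0 : 𝒞 := (exists_pair_ne 𝒞).choose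
noncomputable def p1 : 𝒞 := (exists_pair_ne 𝒞).choose_spec.choose

theorem p0_ne_p1 : p0 𝒞 ≠ p1 𝒞 := (exists_pair_ne 𝒞).choose_spec.choose_spec

noncomputable def DD : ℝ := dist (p0 𝒞) (p1 𝒞)

theorem DD_pos : 0 < DD 𝒞 := dist_pos.mpr (p0_ne_p1 𝒞)

theorem exists_dist_eq {r : ℝ} (h0 : 0 ≤ r) (h1 : r ≤ DD 𝒞) : ∃ z : 𝒞, dist (p0 𝒞) z = r := by
  have : Set.Icc (dist (p0 𝒞) (p0 𝒞)) (dist (p0 𝒞) (p1 𝒞)) ⊆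
      Set.range (fun z : 𝒞 => dist (p0 𝒞) z) :=
    intermediate_value_univ (p0 𝒞) (p1 𝒞) (continuous_const.dist continuous_id)
  have hr : r ∈ Set.Icc (dist (p0 𝒞) (p0 𝒞)) (dist (p0 𝒞) (p1 𝒞)) := by
    simp only [dist_self, Set.mem_Icc]
    exact ⟨h0, h1⟩
  obtain ⟨z, hz⟩ := this hr
  exact ⟨z, hz⟩

noncomputable def qpt (r : ℝ) : 𝒞 :=
  if h : 0 ≤ r ∧ r ≤ DD 𝒞 then (exists_dist_eq 𝒞 h.1 h.2).choose else p0 𝒞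

theorem dist_qpt {r : ℝ} (h0 : 0 ≤ r) (h1 : r ≤ DD 𝒞) : dist (p0 𝒞) (qpt 𝒞 r) = r := by
  unfold qpt
  rw [dif_pos ⟨h0, h1⟩]
  exact (exists_dist_eq 𝒞 h0 h1).choose_spec

theorem qpt_zero : qpt 𝒞 0 = p0 𝒞 := by
  have := dist_qpt 𝒞 (le_refl (0:ℝ)) (DD_pos 𝒞).le
  rw [dist_eq_zero] at this
  exact this.symm

/-- the m separated points -/
noncomputable def q (m j : ℕ) : 𝒞 := qpt 𝒞 ((j : ℝ) * DD 𝒞 / m)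

theorem dist_p0_q {m j : ℕ} (hj : j < m) : dist (p0 𝒞) (q 𝒞 m j) = (j : ℝ) * DD 𝒞 / m := by
  have hm : (0:ℝ) < m := by
    have : 0 < m := by omega
    exact_mod_cast this
  have h0 : 0 ≤ (j : ℝ) * DD 𝒞 / m := by
    have := (DD_pos 𝒞).le
    positivity
  have h1 : (j : ℝ) * DD 𝒞 / m ≤ DD 𝒞 := by
    rw [div_le_iff₀ hm]
    have hj' : (j : ℝ) ≤ m := by exact_mod_cast hj.le
    nlinarith [(DD_pos 𝒞).le]
  exact dist_qpt 𝒞 h0 h1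

theorem q_zero (m : ℕ) : q 𝒞 m 0 = p0 𝒞 := by
  unfold q
  simp [qpt_zero]

theorem q_sep {m j j' : ℕ} (hj : j < m) (hj' : j' < m) (hne : j ≠ j') :
    DD 𝒞 / m ≤ dist (q 𝒞 m j) (q 𝒞 m j') := by
  have h1 := dist_p0_q 𝒞 hj
  have h2 := dist_p0_q 𝒞 hj'
  have habs : |dist (p0 𝒞) (q 𝒞 m j) - dist (p0 𝒞) (q 𝒞 m j')|
      ≤ dist (q 𝒞 m j) (q 𝒞 m j') := by
    have := abs_dist_sub_le (q 𝒞 m j) (q 𝒞 m j') (p0 𝒞)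
    rwa [dist_comm (q 𝒞 m j) (p0 𝒞), dist_comm (q 𝒞 m j') (p0 𝒞)] at this
  rw [h1, h2] at habs
  have hm : (0:ℝ) < m := by
    have : 0 < m := by omega
    exact_mod_cast this
  have h1le : (1 : ℝ) ≤ |(j : ℝ) - (j' : ℝ)| := by
    have hzz : ((j : ℤ) - j') ≠ 0 := by
      intro hc
      exact hne (by omega)
    have : (1 : ℝ) ≤ |((j : ℤ) - j' : ℤ)| := by exact_mod_cast Int.one_le_abs hzz
    calc (1:ℝ) ≤ |((j:ℤ) - j' : ℤ)| := this
      _ = |(j : ℝ) - (j' : ℝ)| := by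
          rw [← abs_of_nonneg (by positivity : (0:ℝ) ≤ |((j:ℤ) - j' : ℤ)|)]
          push_cast
          rw [abs_abs]
  have key : DD 𝒞 / m ≤ |(j : ℝ) * DD 𝒞 / m - (j' : ℝ) * DD 𝒞 / m| := by
    rw [div_sub_div_same, ← sub_mul, abs_div, abs_of_pos hm, abs_mul,
      abs_of_pos (DD_pos 𝒞), mul_div_assoc]
    exact le_mul_of_one_le_left (by have := (DD_pos 𝒞).le; positivity) h1le
  exact key.trans habs

/- chains with chosen lengths -/
noncomputable def chL (ε : ℝ) (x y : 𝒞) : ℕ :=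
  if h : 0 < ε then (exists_chain h x y).choose else 0

noncomputable def chF (ε : ℝ) (x y : 𝒞) : ℕ → 𝒞 :=
  if h : 0 < ε then (exists_chain h x y).choose_spec.choose else fun _ => x

theorem chF_zero {ε : ℝ} (h : 0 < ε) (x y : 𝒞) : chF 𝒞 ε x y 0 = x := by
  unfold chF
  rw [dif_pos h]
  exact (exists_chain h x y).choose_spec.choose_spec.1

theorem chF_end {ε : ℝ} (h : 0 < ε) (x y : 𝒞) {k : ℕ} (hk : chL 𝒞 ε x y ≤ k) :
    chF 𝒞 ε x y k = y := by
  unfold chF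
  rw [dif_pos h]
  apply (exists_chain h x y).choose_spec.choose_spec.2.1
  unfold chL at hk
  rwa [dif_pos h] at hk

theorem chF_step {ε : ℝ} (h : 0 < ε) (x y : 𝒞) (k : ℕ) :
    dist (chF 𝒞 ε x y k) (chF 𝒞 ε x y (k + 1)) ≤ ε := by
  unfold chF
  rw [dif_pos h]
  exact (exists_chain h x y).choose_spec.choose_spec.2.2 k

attribute [irreducible] chL chF qpt q p0 p1 DD

/- stage parameters -/
def msel (s : ℕ) : ℕ := (Nat.unpair s).1 + 2
def nsel (s : ℕ) : ℕ := 2 ^ s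
noncomputable def eps (s : ℕ) : ℝ := ((s : ℝ) + 1)⁻¹

theorem two_le_msel (s : ℕ) : 2 ≤ msel s := Nat.le_add_left 2 _
theorem msel_le (s : ℕ) : msel s ≤ s + 2 := by
  have := Nat.unpair_left_le s
  unfold msel
  omega
theorem one_le_nsel (s : ℕ) : 1 ≤ nsel s := Nat.one_le_two_pow
theorem eps_pos (s : ℕ) : 0 < eps s := by
  unfold eps
  positivity

theorem msel_surj (m : ℕ) (hm : 2 ≤ m) (s₀ : ℕ) : ∃ s, s₀ ≤ s ∧ msel s = m := by
  refine ⟨Nat.pair (m - 2) s₀, ?_, ?_⟩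
  · exact le_trans (Nat.right_le_pair _ _) le_rfl
  · unfold msel
    rw [Nat.unpair_pair]
    omega

noncomputable def Lam (s : ℕ) : ℕ :=
  2 + (Finset.range (msel s) ×ˢ Finset.range (msel s)).sup
    (fun ij => chL 𝒞 (eps s) (q 𝒞 (msel s) ij.1) (q 𝒞 (msel s) ij.2))

theorem two_le_Lam (s : ℕ) : 2 ≤ Lam 𝒞 s := Nat.le_add_right 2 _

theorem chL_le_Lam {s i j : ℕ} (hi : i < msel s) (hj : j < msel s) :
    chL 𝒞 (eps s) (q 𝒞 (msel s) i) (q 𝒞 (msel s) j) + 2 ≤ Lam 𝒞 s := by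
  have : ((i, j) : ℕ × ℕ) ∈ Finset.range (msel s) ×ˢ Finset.range (msel s) := by
    rw [Finset.mem_product]
    exact ⟨Finset.mem_range.2 hi, Finset.mem_range.2 hj⟩
  have hle : chL 𝒞 (eps s) (q 𝒞 (msel s) i) (q 𝒞 (msel s) j) ≤
      (Finset.range (msel s) ×ˢ Finset.range (msel s)).sup
        (fun ij => chL 𝒞 (eps s) (q 𝒞 (msel s) ij.1) (q 𝒞 (msel s) ij.2)) :=
    Finset.le_sup (f := fun ij : ℕ × ℕ =>
      chL 𝒞 (eps s) (q 𝒞 (msel s) ij.1) (q 𝒞 (msel s) ij.2)) this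
  unfold Lam
  omega

def Bnum (s : ℕ) : ℕ := msel s ^ nsel s
noncomputable def blkLen (s : ℕ) : ℕ := (nsel s + 1) * Lam 𝒞 s
noncomputable def Gam (s : ℕ) : ℕ := Bnum s * blkLen 𝒞 s

theorem one_le_Bnum (s : ℕ) : 1 ≤ Bnum s := Nat.one_le_pow _ _ (by have := two_le_msel s; omega)
theorem blkLen_pos (s : ℕ) : 0 < blkLen 𝒞 s := by
  have := two_le_Lam 𝒞 s
  have := one_le_nsel s
  unfold blkLen
  positivity
theorem Gam_pos (s : ℕ) : 0 < Gam 𝒞 s := by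
  have := one_le_Bnum s
  have := blkLen_pos 𝒞 s
  unfold Gam
  positivity
theorem blkLen_le_Gam (s : ℕ) : blkLen 𝒞 s ≤ Gam 𝒞 s := by
  have := one_le_Bnum s
  unfold Gam
  nlinarith [blkLen_pos 𝒞 s]

noncomputable def gcum (s : ℕ) : ℕ := ∑ i ∈ Finset.range s, Gam 𝒞 i

theorem gcum_zero : gcum 𝒞 0 = 0 := rfl
theorem gcum_succ (s : ℕ) : gcum 𝒞 (s + 1) = gcum 𝒞 s + Gam 𝒞 s := Finset.sum_range_succ _ _
theorem gcum_mono : Monotone (gcum 𝒞) := by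
  apply monotone_nat_of_le_succ
  intro s
  rw [gcum_succ]
  omega
theorem le_gcum (s : ℕ) : s ≤ gcum 𝒞 s := by
  induction s with
  | zero => simp [gcum_zero]
  | succ s ih =>
    rw [gcum_succ]
    have := Gam_pos 𝒞 s
    omega

noncomputable def sOf (j : ℕ) : ℕ := invCum (gcum 𝒞) j

theorem gcum_sOf_le (j : ℕ) : gcum 𝒞 (sOf 𝒞 j) ≤ j := invCum_le (gcum_zero 𝒞) j
theorem lt_gcum_sOf_succ (j : ℕ) : j < gcum 𝒞 (sOf 𝒞 j + 1) := lt_invCum_succ (le_gcum 𝒞) j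
theorem sOf_eq {s j : ℕ} (h1 : gcum 𝒞 s ≤ j) (h2 : j < gcum 𝒞 (s + 1)) : sOf 𝒞 j = s :=
  invCum_eq (gcum_mono 𝒞) (le_gcum 𝒞) (gcum_zero 𝒞) h1 h2
theorem sOf_stage {s ℓ : ℕ} (h : ℓ < Gam 𝒞 s) : sOf 𝒞 (gcum 𝒞 s + ℓ) = s := by
  apply sOf_eq
  · omega
  · rw [gcum_succ]; omega
theorem le_sOf {s j : ℕ} (h : gcum 𝒞 s ≤ j) : s ≤ sOf 𝒞 j := by
  by_contra hc
  push_neg at hc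
  have : gcum 𝒞 (sOf 𝒞 j + 1) ≤ gcum 𝒞 s := gcum_mono 𝒞 (by omega)
  have := lt_gcum_sOf_succ 𝒞 j
  omega

/- node points -/
def nodeDig (s π t : ℕ) : ℕ := if t = 0 ∨ t = nsel s + 1 then 0 else dig (msel s) π (t - 1)

theorem nodeDig_lt (s π t : ℕ) : nodeDig s π t < msel s := by
  unfold nodeDig
  split
  · have := two_le_msel s; omega
  · exact dig_lt (by have := two_le_msel s; omega) _ _

noncomputable def node (s π t : ℕ) : 𝒞 := q 𝒞 (msel s) (nodeDig s π t)

/- the path γ -/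
noncomputable def gpath (j : ℕ) : 𝒞 :=
  chF 𝒞 (eps (sOf 𝒞 j))
    (node 𝒞 (sOf 𝒞 j) ((j - gcum 𝒞 (sOf 𝒞 j)) / blkLen 𝒞 (sOf 𝒞 j))
      ((j - gcum 𝒞 (sOf 𝒞 j)) % blkLen 𝒞 (sOf 𝒞 j) / Lam 𝒞 (sOf 𝒞 j)))
    (node 𝒞 (sOf 𝒞 j) ((j - gcum 𝒞 (sOf 𝒞 j)) / blkLen 𝒞 (sOf 𝒞 j))
      ((j - gcum 𝒞 (sOf 𝒞 j)) % blkLen 𝒞 (sOf 𝒞 j) / Lam 𝒞 (sOf 𝒞 j) + 1))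
    ((j - gcum 𝒞 (sOf 𝒞 j)) % blkLen 𝒞 (sOf 𝒞 j) % Lam 𝒞 (sOf 𝒞 j))

theorem inner_lt_blkLen {s lg off : ℕ} (hlg : lg ≤ nsel s) (hoff : off < Lam 𝒞 s) :
    lg * Lam 𝒞 s + off < blkLen 𝒞 s := by
  unfold blkLen
  have : lg * Lam 𝒞 s ≤ nsel s * Lam 𝒞 s := Nat.mul_le_mul_right _ hlg
  nlinarith

theorem gpath_eval {s π lg off : ℕ} (hπ : π < Bnum s) (hlg : lg ≤ nsel s)
    (hoff : off < Lam 𝒞 s) :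
    gpath 𝒞 (gcum 𝒞 s + (lg * Lam 𝒞 s + off + blkLen 𝒞 s * π)) =
      chF 𝒞 (eps s) (node 𝒞 s π lg) (node 𝒞 s π (lg + 1)) off := by
  set r := lg * Lam 𝒞 s + off with hr
  have hrlt : r < blkLen 𝒞 s := inner_lt_blkLen 𝒞 hlg hoff
  set ℓ := r + blkLen 𝒞 s * π with hℓ
  have hℓlt : ℓ < Gam 𝒞 s := by
    unfold Gam
    calc ℓ < blkLen 𝒞 s + blkLen 𝒞 s * π := by omega
    _ = blkLen 𝒞 s * (π + 1) := by ring
    _ ≤ blkLen 𝒞 s * Bnum s := Nat.mul_le_mul_left _ (by omega)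
    _ = Bnum s * blkLen 𝒞 s := by ring
  have hs : sOf 𝒞 (gcum 𝒞 s + ℓ) = s := sOf_stage 𝒞 hℓlt
  have hsub : gcum 𝒞 s + ℓ - gcum 𝒞 s = ℓ := by omega
  have hdiv : ℓ / blkLen 𝒞 s = π := by
    rw [hℓ, Nat.add_mul_div_left _ _ (blkLen_pos 𝒞 s), Nat.div_eq_of_lt hrlt]
    omega
  have hmod : ℓ % blkLen 𝒞 s = r := by
    rw [hℓ, Nat.add_mul_mod_self_left, Nat.mod_eq_of_lt hrlt]
  have hdiv2 : r / Lam 𝒞 s = lg := by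
    have h2 := two_le_Lam 𝒞 s
    rw [hr, mul_comm, Nat.mul_add_div (by omega), Nat.div_eq_of_lt hoff]
    omega
  have hmod2 : r % Lam 𝒞 s = off := by
    rw [hr, mul_comm, Nat.mul_add_mod, Nat.mod_eq_of_lt hoff]
  unfold gpath
  rw [hs, hsub, hdiv, hmod, hdiv2, hmod2]

theorem gpath_visit {s π lg : ℕ} (hπ : π < Bnum s) (hlg : lg ≤ nsel s) :
    gpath 𝒞 (gcum 𝒞 s + (lg * Lam 𝒞 s + (Lam 𝒞 s - 1) + blkLen 𝒞 s * π)) =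
      node 𝒞 s π (lg + 1) := by
  have h2 := two_le_Lam 𝒞 s
  rw [gpath_eval 𝒞 hπ hlg (by omega)]
  apply chF_end 𝒞 (eps_pos s)
  have := chL_le_Lam 𝒞 (nodeDig_lt s π lg) (nodeDig_lt s π (lg + 1))
  unfold node
  omega

theorem gpath_start {s π : ℕ} (hπ : π < Bnum s) :
    gpath 𝒞 (gcum 𝒞 s + blkLen 𝒞 s * π) = p0 𝒞 := by
  have := gpath_eval 𝒞 hπ (Nat.zero_le _) (by have := two_le_Lam 𝒞 s; omega : 0 < Lam 𝒞 s)
  simp only [Nat.zero_mul, Nat.zero_add] at this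
  rw [this, chF_zero 𝒞 (eps_pos s)]
  unfold node nodeDig
  simp [q_zero]

theorem gpath_step (j : ℕ) : dist (gpath 𝒞 j) (gpath 𝒞 (j + 1)) ≤ eps (sOf 𝒞 j) := by
  set s := sOf 𝒞 j with hs
  have h1 : gcum 𝒞 s ≤ j := gcum_sOf_le 𝒞 j
  have h2 : j < gcum 𝒞 (s + 1) := lt_gcum_sOf_succ 𝒞 j
  rw [gcum_succ] at h2
  set ℓ := j - gcum 𝒞 s with hℓdef
  have hℓ : ℓ < Gam 𝒞 s := by omega
  set π := ℓ / blkLen 𝒞 s with hπdef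
  set rm := ℓ % blkLen 𝒞 s with hrmdef
  set lg := rm / Lam 𝒞 s with hlgdef
  set off := rm % Lam 𝒞 s with hoffdef
  have hblk := blkLen_pos 𝒞 s
  have hΛ := two_le_Lam 𝒞 s
  have hπ : π < Bnum s := by
    rw [hπdef, Nat.div_lt_iff_lt_mul hblk]
    calc ℓ < Gam 𝒞 s := hℓ
      _ = Bnum s * blkLen 𝒞 s := rfl
  have hrm : rm < blkLen 𝒞 s := Nat.mod_lt _ hblk
  have hlg : lg ≤ nsel s := by
    have h3 : lg < nsel s + 1 := by
      rw [hlgdef, Nat.div_lt_iff_lt_mul (by omega : 0 < Lam 𝒞 s)]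
      calc rm < blkLen 𝒞 s := hrm
        _ = (nsel s + 1) * Lam 𝒞 s := rfl
    omega
  have hoff : off < Lam 𝒞 s := Nat.mod_lt _ (by omega)
  have e1 : blkLen 𝒞 s * π + rm = ℓ := Nat.div_add_mod ℓ (blkLen 𝒞 s)
  have e2 : Lam 𝒞 s * lg + off = rm := Nat.div_add_mod rm (Lam 𝒞 s)
  have e2' : lg * Lam 𝒞 s = Lam 𝒞 s * lg := mul_comm _ _
  have hj : j = gcum 𝒞 s + (lg * Lam 𝒞 s + off + blkLen 𝒞 s * π) := by omega
  rcases Nat.lt_or_ge (off + 1) (Lam 𝒞 s) with hA | hB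
  · have hj1 : j + 1 = gcum 𝒞 s + (lg * Lam 𝒞 s + (off + 1) + blkLen 𝒞 s * π) := by omega
    rw [hj1, hj, gpath_eval 𝒞 hπ hlg hoff, gpath_eval 𝒞 hπ hlg hA]
    exact chF_step 𝒞 (eps_pos s) _ _ off
  · have hoffeq : off = Lam 𝒞 s - 1 := by omega
    have hgj : gpath 𝒞 j = node 𝒞 s π (lg + 1) := by
      rw [hj, hoffeq]
      exact gpath_visit 𝒞 hπ hlg
    rcases Nat.lt_or_ge lg (nsel s) with hB1 | hB2
    · have hexp : (lg + 1) * Lam 𝒞 s = lg * Lam 𝒞 s + Lam 𝒞 s := by ring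
      have hj1 : j + 1 = gcum 𝒞 s + ((lg + 1) * Lam 𝒞 s + 0 + blkLen 𝒞 s * π) := by omega
      rw [hj1, gpath_eval 𝒞 hπ (by omega) (by omega), hgj, chF_zero 𝒞 (eps_pos s)]
      simp [(eps_pos s).le]
    · have hlgeq : lg = nsel s := le_antisymm hlg hB2
      have hgj0 : gpath 𝒞 j = p0 𝒞 := by
        rw [hgj, hlgeq]
        unfold node nodeDig
        simp [q_zero]
      have hrm1 : rm = blkLen 𝒞 s - 1 := by
        have hblkexp : blkLen 𝒞 s = nsel s * Lam 𝒞 s + Lam 𝒞 s := by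
          show (nsel s + 1) * Lam 𝒞 s = _
          ring
        have hcm : Lam 𝒞 s * nsel s = nsel s * Lam 𝒞 s := mul_comm _ _
        have e2n : Lam 𝒞 s * nsel s + off = rm := by rw [← hlgeq]; exact e2
        omega
      rcases Nat.lt_or_ge (π + 1) (Bnum s) with hB3 | hB4
      · have hexp : blkLen 𝒞 s * (π + 1) = blkLen 𝒞 s * π + blkLen 𝒞 s := by ring
        have hj1 : j + 1 = gcum 𝒞 s + blkLen 𝒞 s * (π + 1) := by omega
        rw [hj1, gpath_start 𝒞 hB3, hgj0]
        simp [(eps_pos s).le]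
      · have hπeq : π + 1 = Bnum s := by omega
        have hexp : blkLen 𝒞 s * π + blkLen 𝒞 s = blkLen 𝒞 s * (π + 1) := by ring
        have hGam : Gam 𝒞 s = blkLen 𝒞 s * (π + 1) := by
          rw [hπeq]
          show Bnum s * blkLen 𝒞 s = _
          ring
        have hj1 : j + 1 = gcum 𝒞 (s + 1) := by
          rw [gcum_succ]
          omega
        have : gpath 𝒞 (j + 1) = p0 𝒞 := by
          have h0 := gpath_start 𝒞 (s := s + 1) (π := 0) (by have := one_le_Bnum (s+1); omega)
          simpa [hj1] using h0
        rw [this, hgj0]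
        simp [(eps_pos s).le]

attribute [irreducible] gpath Lam

/- timing -/
noncomputable def K0 : ℕ := ⌈(4 : ℝ) / DD 𝒞⌉₊ + 1

theorem K0_ge : (4 : ℝ) / DD 𝒞 ≤ K0 𝒞 := by
  unfold K0
  push_cast
  have := Nat.le_ceil ((4 : ℝ) / DD 𝒞)
  linarith

noncomputable def Ctime : ℕ → ℕ
  | 0 => 0
  | s + 1 => Ctime s + Gam 𝒞 s * (3 * (s + 1) * (Ctime s + Gam 𝒞 s + 2) + K0 𝒞 * (s + 3))

noncomputable def Wt (s : ℕ) : ℕ :=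
  3 * (s + 1) * (Ctime 𝒞 s + Gam 𝒞 s + 2) + K0 𝒞 * (s + 3)

theorem Ctime_zero : Ctime 𝒞 0 = 0 := rfl
theorem Ctime_succ (s : ℕ) : Ctime 𝒞 (s + 1) = Ctime 𝒞 s + Gam 𝒞 s * Wt 𝒞 s := rfl

theorem base_le_Wt (s : ℕ) : Ctime 𝒞 s + Gam 𝒞 s + 2 ≤ Wt 𝒞 s := by
  unfold Wt
  nlinarith [Nat.zero_le (Ctime 𝒞 s + Gam 𝒞 s + 2)]

theorem Wt_pos (s : ℕ) : 0 < Wt 𝒞 s := by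
  have := base_le_Wt 𝒞 s
  omega

theorem Wt_le_Ctime_succ (s : ℕ) : Wt 𝒞 s ≤ Ctime 𝒞 (s + 1) := by
  rw [Ctime_succ]
  have h1 := Gam_pos 𝒞 s
  have h2 := Wt_pos 𝒞 s
  nlinarith

theorem Ctime_mono_succ (s : ℕ) : Ctime 𝒞 s ≤ Ctime 𝒞 (s + 1) := by
  rw [Ctime_succ]; omega

theorem Ctime_mono : Monotone (Ctime 𝒞) := monotone_nat_of_le_succ (Ctime_mono_succ 𝒞)

theorem Wt_lt_Wt_succ (s : ℕ) : Wt 𝒞 s < Wt 𝒞 (s + 1) := by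
  have h1 : Wt 𝒞 s ≤ Ctime 𝒞 (s + 1) := Wt_le_Ctime_succ 𝒞 s
  have h2 : Ctime 𝒞 (s + 1) + Gam 𝒞 (s + 1) + 2 ≤ Wt 𝒞 (s + 1) := base_le_Wt 𝒞 (s + 1)
  omega

theorem Wt_mono : Monotone (Wt 𝒞) :=
  monotone_nat_of_le_succ (fun s => (Wt_lt_Wt_succ 𝒞 s).le)

theorem le_Wt (s : ℕ) : s ≤ Wt 𝒞 s := by
  unfold Wt
  nlinarith [Nat.zero_le (Ctime 𝒞 s + Gam 𝒞 s + 2), Nat.zero_le (K0 𝒞 * (s + 3))]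

theorem Ctime_succ_le_sq (s : ℕ) : Ctime 𝒞 (s + 1) ≤ Wt 𝒞 s * Wt 𝒞 s := by
  rw [Ctime_succ]
  have h1 : Ctime 𝒞 s + Gam 𝒞 s + 2 ≤ Wt 𝒞 s := base_le_Wt 𝒞 s
  have h2 : 0 < Wt 𝒞 s := Wt_pos 𝒞 s
  calc Ctime 𝒞 s + Gam 𝒞 s * Wt 𝒞 s
      ≤ Ctime 𝒞 s * Wt 𝒞 s + Gam 𝒞 s * Wt 𝒞 s := by
        have := Nat.le_mul_of_pos_right (Ctime 𝒞 s) h2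
        omega
    _ = (Ctime 𝒞 s + Gam 𝒞 s) * Wt 𝒞 s := by ring
    _ ≤ Wt 𝒞 s * Wt 𝒞 s := Nat.mul_le_mul_right _ (by omega)

/- the time scale -/
noncomputable def Tt (j : ℕ) : ℕ :=
  Ctime 𝒞 (sOf 𝒞 j) + (j - gcum 𝒞 (sOf 𝒞 j)) * Wt 𝒞 (sOf 𝒞 j)

theorem Tt_stage {s ℓ : ℕ} (h : ℓ < Gam 𝒞 s) :
    Tt 𝒞 (gcum 𝒞 s + ℓ) = Ctime 𝒞 s + ℓ * Wt 𝒞 s := by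
  unfold Tt
  rw [sOf_stage 𝒞 h]
  congr 2
  omega

theorem Tt_gcum (s : ℕ) : Tt 𝒞 (gcum 𝒞 s) = Ctime 𝒞 s := by
  have := Tt_stage 𝒞 (Gam_pos 𝒞 s)
  simpa using this

theorem Tt_zero : Tt 𝒞 0 = 0 := by
  have := Tt_gcum 𝒞 0
  rw [gcum_zero, Ctime_zero] at this
  exact this

theorem Tt_succ (j : ℕ) : Tt 𝒞 (j + 1) = Tt 𝒞 j + Wt 𝒞 (sOf 𝒞 j) := by
  set s := sOf 𝒞 j with hs
  have h1 : gcum 𝒞 s ≤ j := gcum_sOf_le 𝒞 j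
  have h2 : j < gcum 𝒞 (s + 1) := lt_gcum_sOf_succ 𝒞 j
  rw [gcum_succ] at h2
  set ℓ := j - gcum 𝒞 s with hℓdef
  have hj : j = gcum 𝒞 s + ℓ := by omega
  have hTj : Tt 𝒞 j = Ctime 𝒞 s + ℓ * Wt 𝒞 s := by
    rw [hj]; exact Tt_stage 𝒞 (by omega)
  rcases Nat.lt_or_ge (ℓ + 1) (Gam 𝒞 s) with hA | hB
  · have : Tt 𝒞 (j + 1) = Ctime 𝒞 s + (ℓ + 1) * Wt 𝒞 s := by
      have : j + 1 = gcum 𝒞 s + (ℓ + 1) := by omega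
      rw [this]; exact Tt_stage 𝒞 hA
    rw [this, hTj]
    ring
  · have hℓeq : ℓ + 1 = Gam 𝒞 s := by omega
    have hj1 : j + 1 = gcum 𝒞 (s + 1) := by rw [gcum_succ]; omega
    rw [hj1, Tt_gcum, Ctime_succ, hTj, ← hℓeq]
    ring

theorem le_Tt (j : ℕ) : j ≤ Tt 𝒞 j := by
  induction j with
  | zero => simp [Tt_zero]
  | succ j ih =>
    rw [Tt_succ]
    have := Wt_pos 𝒞 (sOf 𝒞 j)
    omega

theorem Tt_lt_succ (j : ℕ) : Tt 𝒞 j < Tt 𝒞 (j + 1) := by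
  rw [Tt_succ]
  have := Wt_pos 𝒞 (sOf 𝒞 j)
  omega

theorem Tt_mono : Monotone (Tt 𝒞) := monotone_nat_of_le_succ (fun j => (Tt_lt_succ 𝒞 j).le)

theorem Tt_strictMono : StrictMono (Tt 𝒞) := strictMono_nat_of_lt_succ (Tt_lt_succ 𝒞)

noncomputable def jOf (t : ℕ) : ℕ := invCum (Tt 𝒞) t

theorem Tt_jOf_le (t : ℕ) : Tt 𝒞 (jOf 𝒞 t) ≤ t := invCum_le (Tt_zero 𝒞) t
theorem lt_Tt_jOf_succ (t : ℕ) : t < Tt 𝒞 (jOf 𝒞 t + 1) := lt_invCum_succ (le_Tt 𝒞) t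
theorem jOf_eq {j t : ℕ} (h1 : Tt 𝒞 j ≤ t) (h2 : t < Tt 𝒞 (j + 1)) : jOf 𝒞 t = j :=
  invCum_eq (Tt_mono 𝒞) (le_Tt 𝒞) (Tt_zero 𝒞) h1 h2
theorem jOf_Tt (j : ℕ) : jOf 𝒞 (Tt 𝒞 j) = j := jOf_eq 𝒞 le_rfl (Tt_lt_succ 𝒞 j)

noncomputable def cseq (t : ℕ) : 𝒞 := gpath 𝒞 (jOf 𝒞 t)

theorem cseq_Tt (j : ℕ) : cseq 𝒞 (Tt 𝒞 j) = gpath 𝒞 j := by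
  unfold cseq
  rw [jOf_Tt]

theorem jOf_succ (t : ℕ) : jOf 𝒞 (t + 1) = jOf 𝒞 t ∨
    (jOf 𝒞 (t + 1) = jOf 𝒞 t + 1 ∧ t + 1 = Tt 𝒞 (jOf 𝒞 t + 1)) := by
  rcases Nat.lt_or_ge (t + 1) (Tt 𝒞 (jOf 𝒞 t + 1)) with h | h
  · left
    exact jOf_eq 𝒞 (le_trans (Tt_jOf_le 𝒞 t) (by omega)) h
  · have heq : t + 1 = Tt 𝒞 (jOf 𝒞 t + 1) := by
      have := lt_Tt_jOf_succ 𝒞 t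
      omega
    right
    refine ⟨?_, heq⟩
    apply jOf_eq 𝒞 (by omega)
    rw [heq]
    exact Tt_lt_succ 𝒞 _

theorem cseq_step (t : ℕ) :
    dist (cseq 𝒞 t) (cseq 𝒞 (t + 1)) ≤ eps (sOf 𝒞 (jOf 𝒞 t)) := by
  rcases jOf_succ 𝒞 t with h | ⟨h, _⟩
  · unfold cseq
    rw [h]
    simp [(eps_pos _).le]
  · unfold cseq
    rw [h]
    exact gpath_step 𝒞 (jOf 𝒞 t)

theorem cseq_change {t : ℕ} (h : cseq 𝒞 t ≠ cseq 𝒞 (t + 1)) :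
    jOf 𝒞 (t + 1) = jOf 𝒞 t + 1 ∧ t + 1 = Tt 𝒞 (jOf 𝒞 (t + 1)) := by
  rcases jOf_succ 𝒞 t with h' | ⟨h', ht⟩
  · exfalso
    apply h
    unfold cseq
    rw [h']
  · rw [h']
    exact ⟨rfl, ht⟩

theorem stage_time_ge {s t : ℕ} (h : Ctime 𝒞 s ≤ t) : s ≤ sOf 𝒞 (jOf 𝒞 t) := by
  apply le_sOf
  by_contra hc
  push_neg at hc
  have h1 : jOf 𝒞 t + 1 ≤ gcum 𝒞 s := by omega
  have h2 : Tt 𝒞 (jOf 𝒞 t + 1) ≤ Tt 𝒞 (gcum 𝒞 s) := Tt_mono 𝒞 h1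
  rw [Tt_gcum] at h2
  have := lt_Tt_jOf_succ 𝒞 t
  omega

/-! ### The space X -/

/-- the ambient space -/
abbrev Amb : Type := lp (fun _ : ℕ => ℝ) ∞ × ℝ

set_option synthInstance.maxHeartbeats 1000000 in
noncomputable instance AmbMS : MetricSpace Amb := inferInstance
set_option synthInstance.maxHeartbeats 1000000 in
instance AmbT2 : T2Space Amb := inferInstance
set_option synthInstance.maxHeartbeats 1000000 in
instance AmbT1 : T1Space Amb := inferInstance
set_option synthInstance.maxHeartbeats 1000000 in
instance AmbComplete : CompleteSpace Amb := inferInstance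

noncomputable def emb (z : 𝒞) : Amb := (kuratowskiEmbedding 𝒞 z, 0)

theorem dist_emb (z w : 𝒞) : dist (emb 𝒞 z) (emb 𝒞 w) = dist z w := by
  unfold emb
  rw [Prod.dist_eq]
  simp [(kuratowskiEmbedding.isometry 𝒞).dist_eq]

noncomputable def tcoord (k : ℕ) : ℝ := ((k : ℝ) + 1)⁻¹

theorem tcoord_pos (k : ℕ) : 0 < tcoord k := by unfold tcoord; positivity
theorem tcoord_le_one (k : ℕ) : tcoord k ≤ 1 := by
  unfold tcoord
  rw [inv_le_one_iff₀]
  right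
  have : (0:ℝ) ≤ (k:ℝ) := Nat.cast_nonneg k
  linarith
theorem tcoord_strict_anti : StrictAnti tcoord := by
  intro a b hab
  unfold tcoord
  apply inv_strictAnti₀
  · positivity
  · have : (a : ℝ) < b := by exact_mod_cast hab
    linarith
theorem tcoord_anti : Antitone tcoord := tcoord_strict_anti.antitone
theorem tcoord_lt_iff {k : ℕ} {r : ℝ} (hr : 0 < r) : tcoord k < r ↔ 1 / r < (k : ℝ) + 1 := by
  unfold tcoord
  rw [inv_lt_iff_one_lt_mul₀ (by positivity), ← div_lt_iff₀' (by positivity)]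

noncomputable def orbE (k : ℕ) : Amb := (kuratowskiEmbedding 𝒞 (cseq 𝒞 k), tcoord k)

theorem dist_orbE (k l : ℕ) :
    dist (orbE 𝒞 k) (orbE 𝒞 l) = max (dist (cseq 𝒞 k) (cseq 𝒞 l)) (dist (tcoord k) (tcoord l)) := by
  unfold orbE
  rw [Prod.dist_eq]
  simp [(kuratowskiEmbedding.isometry 𝒞).dist_eq]

theorem dist_orbE_emb (k : ℕ) (z : 𝒞) :
    dist (orbE 𝒞 k) (emb 𝒞 z) = max (dist (cseq 𝒞 k) z) (tcoord k) := by
  unfold orbE emb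
  rw [Prod.dist_eq]
  simp [(kuratowskiEmbedding.isometry 𝒞).dist_eq, Real.dist_eq,
    abs_of_pos (tcoord_pos k)]

theorem orbE_injective : Function.Injective (orbE 𝒞) := by
  intro k l h
  have ht : tcoord k = tcoord l := congrArg Prod.snd h
  exact tcoord_strict_anti.injective ht

theorem orbE_ne_emb (k : ℕ) (z : 𝒞) : orbE 𝒞 k ≠ emb 𝒞 z := by
  intro h
  have : tcoord k = 0 := congrArg Prod.snd h
  exact absurd this (tcoord_pos k).ne'

def XS : Set Amb := Set.range (emb 𝒞) ∪ Set.range (orbE 𝒞)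

theorem isCompact_range_emb : IsCompact (Set.range (emb 𝒞)) :=
  isCompact_range (by
    have : Isometry (emb 𝒞) := by
      intro a b
      rw [edist_dist, edist_dist, dist_emb]
    exact this.continuous)

theorem closure_orbE_subset : closure (Set.range (orbE 𝒞)) ⊆ XS 𝒞 := by
  intro z hz
  by_cases hzo : z ∈ Set.range (orbE 𝒞)
  · exact Or.inr hzo
  · left
    have key : ∀ K : ℕ, z ∈ closure {w | ∃ k, K ≤ k ∧ w = orbE 𝒞 k} := by
      intro K
      have hsplit : Set.range (orbE 𝒞) ⊆
          (orbE 𝒞 '' {k | k < K}) ∪ {w | ∃ k, K ≤ k ∧ w = orbE 𝒞 k} := by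
        rintro w ⟨k, rfl⟩
        rcases Nat.lt_or_ge k K with h | h
        · exact Or.inl ⟨k, h, rfl⟩
        · exact Or.inr ⟨k, h, rfl⟩
      have h1 : z ∈ closure ((orbE 𝒞 '' {k | k < K}) ∪ {w | ∃ k, K ≤ k ∧ w = orbE 𝒞 k}) :=
        closure_mono hsplit hz
      rw [closure_union] at h1
      rcases h1 with h1 | h1
      · exfalso
        have hfin : (orbE 𝒞 '' {k | k < K}).Finite :=
          Set.Finite.image _ (Set.finite_lt_nat K)
        rw [hfin.isClosed.closure_eq] at h1
        obtain ⟨k, _, hk⟩ := h1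
        exact hzo ⟨k, hk⟩
      · exact h1
    have : z ∈ closure (Set.range (emb 𝒞)) := by
      rw [Metric.mem_closure_iff]
      intro ε hε
      obtain ⟨K, hK⟩ : ∃ K : ℕ, tcoord K < ε / 2 := by
        obtain ⟨K, hK⟩ := exists_nat_gt (2 / ε)
        refine ⟨K, ?_⟩
        rw [tcoord_lt_iff (by positivity)]
        rw [one_div_div]
        linarith
      have h2 := key K
      rw [Metric.mem_closure_iff] at h2
      obtain ⟨w, ⟨k, hKk, rfl⟩, hw⟩ := h2 (ε / 2) (by positivity)
      refine ⟨emb 𝒞 (cseq 𝒞 k), ⟨cseq 𝒞 k, rfl⟩, ?_⟩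
      have h3 : dist (orbE 𝒞 k) (emb 𝒞 (cseq 𝒞 k)) = tcoord k := by
        rw [dist_orbE_emb]
        simp [(tcoord_pos k).le]
      calc dist z (emb 𝒞 (cseq 𝒞 k))
          ≤ dist z (orbE 𝒞 k) + dist (orbE 𝒞 k) (emb 𝒞 (cseq 𝒞 k)) := dist_triangle _ _ _
        _ < ε / 2 + tcoord k := by rw [h3]; linarith
        _ ≤ ε / 2 + tcoord K := by have := tcoord_anti hKk; linarith
        _ < ε := by linarith
    rwa [(isCompact_range_emb 𝒞).isClosed.closure_eq] at this

theorem isClosed_XS : IsClosed (XS 𝒞) := by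
  apply isClosed_of_closure_subset
  unfold XS
  rw [closure_union]
  apply Set.union_subset
  · rw [(isCompact_range_emb 𝒞).isClosed.closure_eq]
    exact Set.subset_union_left
  · exact closure_orbE_subset 𝒞

theorem totallyBounded_orbE : TotallyBounded (Set.range (orbE 𝒞)) := by
  rw [Metric.totallyBounded_iff]
  intro ε hε
  obtain ⟨K, hK⟩ : ∃ K : ℕ, tcoord K < ε / 2 := by
    obtain ⟨K, hK⟩ := exists_nat_gt (2 / ε)
    refine ⟨K, ?_⟩
    rw [tcoord_lt_iff (by positivity), one_div_div]
    linarith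
  obtain ⟨N, hNfin, hN⟩ := Metric.totallyBounded_iff.mp
    (isCompact_range_emb 𝒞).totallyBounded (ε / 2) (by positivity)
  refine ⟨N ∪ (orbE 𝒞 '' {k | k < K}), hNfin.union (Set.Finite.image _ (Set.finite_lt_nat K)), ?_⟩
  rintro w ⟨k, rfl⟩
  rcases Nat.lt_or_ge k K with h | h
  · exact Set.mem_biUnion (Set.mem_union_right _ ⟨k, h, rfl⟩) (Metric.mem_ball_self hε)
  · have h3 : dist (orbE 𝒞 k) (emb 𝒞 (cseq 𝒞 k)) = tcoord k := by
      rw [dist_orbE_emb]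
      simp [(tcoord_pos k).le]
    have : emb 𝒞 (cseq 𝒞 k) ∈ ⋃ y ∈ N, Metric.ball y (ε / 2) := hN ⟨cseq 𝒞 k, rfl⟩
    obtain ⟨y, hy, hby⟩ := Set.mem_iUnion₂.mp this
    apply Set.mem_biUnion (Set.mem_union_left _ hy)
    rw [Metric.mem_ball] at hby ⊢
    calc dist (orbE 𝒞 k) y ≤ dist (orbE 𝒞 k) (emb 𝒞 (cseq 𝒞 k)) + dist (emb 𝒞 (cseq 𝒞 k)) y :=
        dist_triangle _ _ _
      _ < tcoord k + ε / 2 := by rw [h3]; linarith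
      _ ≤ tcoord K + ε / 2 := by have := tcoord_anti h; linarith
      _ < ε := by linarith

theorem isCompact_XS : IsCompact (XS 𝒞) := by
  apply TotallyBounded.isCompact_of_isClosed
  · exact TotallyBounded.union (isCompact_range_emb 𝒞).totallyBounded (totallyBounded_orbE 𝒞)
  · exact isClosed_XS 𝒞

/-! ### points and the map T -/

theorem eps_anti : Antitone (eps) := by
  intro a b hab
  unfold eps
  apply inv_anti₀
  · positivity
  · have : (a:ℝ) ≤ b := by exact_mod_cast hab
    linarith

noncomputable def xpt (k : ℕ) : {a : Amb // a ∈ XS 𝒞} := ⟨orbE 𝒞 k, Or.inr ⟨k, rfl⟩⟩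
noncomputable def cpt (z : 𝒞) : {a : Amb // a ∈ XS 𝒞} := ⟨emb 𝒞 z, Or.inl ⟨z, rfl⟩⟩

theorem dist_xpt_xpt (k l : ℕ) : dist (xpt 𝒞 k) (xpt 𝒞 l) =
    max (dist (cseq 𝒞 k) (cseq 𝒞 l)) (dist (tcoord k) (tcoord l)) := by
  rw [Subtype.dist_eq]
  exact dist_orbE 𝒞 k l

theorem dist_xpt_cpt (k : ℕ) (z : 𝒞) : dist (xpt 𝒞 k) (cpt 𝒞 z) =
    max (dist (cseq 𝒞 k) z) (tcoord k) := by
  rw [Subtype.dist_eq]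
  exact dist_orbE_emb 𝒞 k z

theorem dist_cpt_cpt (z w : 𝒞) : dist (cpt 𝒞 z) (cpt 𝒞 w) = dist z w := by
  rw [Subtype.dist_eq]
  exact dist_emb 𝒞 z w

theorem xpt_injective : Function.Injective (xpt 𝒞) := by
  intro k l h
  exact orbE_injective 𝒞 (congrArg Subtype.val h)

theorem xpt_ne_cpt (k : ℕ) (z : 𝒞) : xpt 𝒞 k ≠ cpt 𝒞 z := by
  intro h
  exact orbE_ne_emb 𝒞 k z (congrArg Subtype.val h)

open Classical in
noncomputable def TX : {a : Amb // a ∈ XS 𝒞} → {a : Amb // a ∈ XS 𝒞} := fun x =>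
  if h : ∃ k, (x : Amb) = orbE 𝒞 k then xpt 𝒞 (Nat.find h + 1) else x

theorem TX_of_emb {x : {a : Amb // a ∈ XS 𝒞}} (h : (x : Amb) ∈ Set.range (emb 𝒞)) :
    TX 𝒞 x = x := by
  unfold TX
  rw [dif_neg]
  rintro ⟨k, hk⟩
  obtain ⟨z, hz⟩ := h
  exact orbE_ne_emb 𝒞 k z (by rw [← hk, ← hz])

theorem TX_cpt (z : 𝒞) : TX 𝒞 (cpt 𝒞 z) = cpt 𝒞 z := TX_of_emb 𝒞 ⟨z, rfl⟩

theorem TX_xpt (k : ℕ) : TX 𝒞 (xpt 𝒞 k) = xpt 𝒞 (k + 1) := by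
  classical
  unfold TX
  have h : ∃ l, ((xpt 𝒞 k : {a : Amb // a ∈ XS 𝒞}) : Amb) = orbE 𝒞 l := ⟨k, rfl⟩
  rw [dif_pos h]
  have h1 : orbE 𝒞 (Nat.find h) = orbE 𝒞 k := (Nat.find_spec h).symm
  have h2 : Nat.find h = k := orbE_injective 𝒞 h1
  rw [h2]

theorem TX_iter_xpt (k n : ℕ) : (TX 𝒞)^[n] (xpt 𝒞 k) = xpt 𝒞 (k + n) := by
  induction n with
  | zero => simp
  | succ n ih =>
    rw [Function.iterate_succ_apply', ih, TX_xpt]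
    have hadd : k + (n + 1) = k + n + 1 := by omega
    rw [hadd]

theorem tcoord_gap_anti {k : ℕ} (hk : 1 ≤ k) :
    tcoord k - tcoord (k + 1) ≤ tcoord (k - 1) - tcoord k := by
  have hcast : ((k - 1 : ℕ) : ℝ) + 1 = (k : ℝ) := by
    have : ((k - 1 : ℕ) : ℝ) = (k : ℝ) - 1 := by
      have : (1:ℕ) ≤ k := hk
      push_cast [Nat.cast_sub this]
      ring
    rw [this]; ring
  unfold tcoord
  rw [hcast]
  push_cast
  have hk1 : (1:ℝ) ≤ (k:ℝ) := by exact_mod_cast hk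
  have key : ∀ a : ℝ, 1 ≤ a → (a+1)⁻¹ - (a+1+1)⁻¹ ≤ a⁻¹ - (a+1)⁻¹ := by
    intro a ha
    have h0 : 0 < a := by linarith
    have h1 : 0 < a+1 := by linarith
    have h2 : 0 < a+1+1 := by linarith
    have e1 : (a+1)⁻¹ - (a+1+1)⁻¹ = (a+1)⁻¹ * (a+1+1)⁻¹ := by
      field_simp
      try ring
    have e2 : a⁻¹ - (a+1)⁻¹ = a⁻¹ * (a+1)⁻¹ := by
      field_simp
      try ring
    rw [e1, e2]
    apply mul_le_mul ?_ ?_ (by positivity) (by positivity)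
    · exact inv_anti₀ h0 (by linarith)
    · exact inv_anti₀ h1 (by linarith)
  exact key (k:ℝ) hk1

theorem isolated_xpt (k : ℕ) :
    ∀ y : {a : Amb // a ∈ XS 𝒞}, dist y (xpt 𝒞 k) < tcoord k - tcoord (k + 1) → y = xpt 𝒞 k := by
  intro y hy
  have hδ : 0 < tcoord k - tcoord (k + 1) := by
    have := tcoord_strict_anti (Nat.lt_succ_self k)
    linarith
  rcases y.2 with ⟨z, hz⟩ | ⟨l, hl⟩
  · exfalso
    have hyz : y = cpt 𝒞 z := Subtype.ext hz.symm
    rw [hyz, dist_comm, dist_xpt_cpt] at hy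
    have h1 : tcoord k ≤ max (dist (cseq 𝒞 k) z) (tcoord k) := le_max_right _ _
    have h2 : tcoord (k+1) > 0 := tcoord_pos _
    linarith
  · have hyl : y = xpt 𝒞 l := Subtype.ext hl.symm
    by_cases hlk : l = k
    · rw [hyl, hlk]
    · exfalso
      rw [hyl, dist_xpt_xpt] at hy
      have h1 : dist (tcoord l) (tcoord k) ≤
          max (dist (cseq 𝒞 l) (cseq 𝒞 k)) (dist (tcoord l) (tcoord k)) := le_max_right _ _
      have h2 : tcoord k - tcoord (k+1) ≤ dist (tcoord l) (tcoord k) := by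
        rw [Real.dist_eq]
        rcases Nat.lt_or_ge k l with h | h
        · have : tcoord l ≤ tcoord (k + 1) := tcoord_anti h
          rw [abs_of_nonpos (by
            have := tcoord_anti h.le
            linarith)]
          linarith
        · have hlk' : l < k := by omega
          have hk1 : 1 ≤ k := by omega
          have hll : tcoord (k-1) ≤ tcoord l := tcoord_anti (by omega)
          have := tcoord_gap_anti hk1
          rw [abs_of_nonneg (by
            have := tcoord_anti hlk'.le
            linarith)]
          linarith
      linarith

theorem continuous_TX : Continuous (TX 𝒞) := by
  rw [Metric.continuous_iff]
  intro x ε hε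
  rcases x.2 with ⟨z, hz⟩ | ⟨k, hk⟩
  · -- fixed point of C0
    have hxz : x = cpt 𝒞 z := Subtype.ext hz.symm
    obtain ⟨s, hs⟩ : ∃ s : ℕ, eps s ≤ ε / 4 := by
      obtain ⟨s, hs⟩ := exists_nat_gt (4 / ε)
      refine ⟨s, ?_⟩
      unfold eps
      rw [inv_le_iff_one_le_mul₀ (by positivity)]
      rw [div_lt_iff₀ (by positivity)] at hs
      nlinarith
    refine ⟨min (ε / 4) (tcoord (Ctime 𝒞 s)), lt_min (by positivity) (tcoord_pos _), ?_⟩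
    intro y hy
    rcases y.2 with ⟨w, hw⟩ | ⟨l, hl⟩
    · have hyw : y = cpt 𝒞 w := Subtype.ext hw.symm
      rw [hyw, TX_cpt, hxz, TX_cpt, ← hxz, ← hyw]
      calc dist y x < min (ε / 4) (tcoord (Ctime 𝒞 s)) := hy
        _ ≤ ε / 4 := min_le_left _ _
        _ < ε := by linarith
    · have hyl : y = xpt 𝒞 l := Subtype.ext hl.symm
      have htl : tcoord l < min (ε / 4) (tcoord (Ctime 𝒞 s)) := by
        have : tcoord l ≤ dist y x := by
          rw [hyl, hxz, dist_xpt_cpt]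
          exact le_max_right _ _
        linarith
      have hlk : Ctime 𝒞 s < l := by
        by_contra hc
        push_neg at hc
        have : tcoord l ≥ tcoord (Ctime 𝒞 s) := tcoord_anti hc
        have : min (ε / 4) (tcoord (Ctime 𝒞 s)) ≤ tcoord (Ctime 𝒞 s) := min_le_right _ _
        linarith
      have hstep : dist (xpt 𝒞 (l+1)) (xpt 𝒞 l) ≤ ε / 4 := by
        rw [dist_xpt_xpt]
        apply max_le
        · rw [dist_comm]
          calc dist (cseq 𝒞 l) (cseq 𝒞 (l+1)) ≤ eps (sOf 𝒞 (jOf 𝒞 l)) := cseq_step 𝒞 l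
            _ ≤ eps s := eps_anti (stage_time_ge 𝒞 (by omega))
            _ ≤ ε / 4 := hs
        · rw [Real.dist_eq, abs_of_nonpos (by
            have := tcoord_anti (Nat.le_succ l)
            linarith)]
          have h1 : tcoord (l+1) > 0 := tcoord_pos _
          have : tcoord l ≤ ε / 4 := le_trans htl.le (min_le_left _ _)
          linarith
      rw [hyl, TX_xpt, hxz, TX_cpt, ← hxz]
      calc dist (xpt 𝒞 (l+1)) x ≤ dist (xpt 𝒞 (l+1)) (xpt 𝒞 l) + dist (xpt 𝒞 l) x :=
          dist_triangle _ _ _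
        _ ≤ ε / 4 + dist y x := by
            have hd : dist (xpt 𝒞 l) x = dist y x := by rw [hyl]
            linarith
        _ < ε / 4 + min (ε / 4) (tcoord (Ctime 𝒞 s)) := by linarith
        _ ≤ ε / 4 + ε / 4 := by have := min_le_left (ε/4) (tcoord (Ctime 𝒞 s)); linarith
        _ < ε := by linarith
  · -- isolated orbit point
    have hxk : x = xpt 𝒞 k := Subtype.ext hk.symm
    refine ⟨tcoord k - tcoord (k + 1), by
      have := tcoord_strict_anti (Nat.lt_succ_self k)
      linarith, ?_⟩
    intro y hy
    have : y = xpt 𝒞 k := isolated_xpt 𝒞 k y (by rw [← hxk]; exact hy)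
    rw [this, ← hxk]
    simpa using hε

theorem compactSpace_X : CompactSpace {a : Amb // a ∈ XS 𝒞} :=
  isCompact_iff_compactSpace.mp (isCompact_XS 𝒞)

def C0set : Set {a : Amb // a ∈ XS 𝒞} := {x | (x : Amb) ∈ Set.range (emb 𝒞)}

theorem TX_fixes_C0 : ∀ y ∈ C0set 𝒞, TX 𝒞 y = y := fun y hy => TX_of_emb 𝒞 hy

theorem TX_iter_fixes_C0 {y : {a : Amb // a ∈ XS 𝒞}} (hy : y ∈ C0set 𝒞) (n : ℕ) :
    (TX 𝒞)^[n] y = y := by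
  induction n with
  | zero => rfl
  | succ n ih => rw [Function.iterate_succ_apply', ih, TX_fixes_C0 𝒞 y hy]

theorem homeo_C0 : Nonempty (↥(C0set 𝒞) ≃ₜ 𝒞) := by
  let f : 𝒞 → ↥(C0set 𝒞) := fun z => ⟨cpt 𝒞 z, ⟨z, rfl⟩⟩
  have hdist : ∀ a b : 𝒞, dist (f a) (f b) = dist a b := by
    intro a b
    rw [Subtype.dist_eq]
    exact dist_cpt_cpt 𝒞 a b
  have hinj : Function.Injective f := by
    intro a b h
    have : dist (f a) (f b) = 0 := by rw [h, dist_self]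
    rw [hdist] at this
    exact dist_eq_zero.mp this
  have hsurj : Function.Surjective f := by
    rintro ⟨x, z, hz⟩
    exact ⟨z, Subtype.ext (Subtype.ext hz)⟩
  have hcont : Continuous f := by
    apply Isometry.continuous
    intro a b
    rw [edist_dist, edist_dist, hdist]
  let e : 𝒞 ≃ ↥(C0set 𝒞) := Equiv.ofBijective f ⟨hinj, hsurj⟩
  have hconte : Continuous e := hcont
  exact ⟨(hconte.homeoOfEquivCompactToT2).symm⟩

theorem orbit_eq_xpt (n : ℕ) : (TX 𝒞)^[n] (xpt 𝒞 0) = xpt 𝒞 n := by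
  rw [TX_iter_xpt]
  congr 1
  omega

theorem inj_orbit : Function.Injective (fun n : ℕ => (TX 𝒞)^[n] (xpt 𝒞 0)) := by
  intro a b h
  simp only [orbit_eq_xpt] at h
  exact xpt_injective 𝒞 h

theorem range_orbit_eq : Set.range (fun n : ℕ => (TX 𝒞)^[n] (xpt 𝒞 0)) =
    {x : {a : Amb // a ∈ XS 𝒞} | (x : Amb) ∈ Set.range (orbE 𝒞)} := by
  ext x
  constructor
  · rintro ⟨n, rfl⟩
    simp only [orbit_eq_xpt]
    exact ⟨n, rfl⟩
  · rintro ⟨k, hk⟩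
    refine ⟨k, ?_⟩
    simp only [orbit_eq_xpt]
    exact (Subtype.ext hk.symm).symm

theorem disjoint_C0_orbit :
    Disjoint (C0set 𝒞) (Set.range (fun n : ℕ => (TX 𝒞)^[n] (xpt 𝒞 0))) := by
  rw [Set.disjoint_left, range_orbit_eq]
  rintro x ⟨z, hz⟩ ⟨k, hk⟩
  exact orbE_ne_emb 𝒞 k z (by rw [hk, hz])

theorem union_C0_orbit :
    C0set 𝒞 ∪ Set.range (fun n : ℕ => (TX 𝒞)^[n] (xpt 𝒞 0)) = Set.univ := by
  rw [range_orbit_eq]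
  apply Set.eq_univ_of_forall
  intro x
  rcases x.2 with h | h
  · exact Or.inl h
  · exact Or.inr h

/-! ### lower bound: the covers U_m and pattern forcing -/

theorem Ctime_ge_K0 {s : ℕ} (hs : 1 ≤ s) : K0 𝒞 * (s + 2) ≤ Ctime 𝒞 s := by
  obtain ⟨s', rfl⟩ : ∃ s', s = s' + 1 := ⟨s - 1, by omega⟩
  have h1 : Wt 𝒞 s' ≤ Ctime 𝒞 (s' + 1) := Wt_le_Ctime_succ 𝒞 s'
  have h2 : K0 𝒞 * (s' + 3) ≤ Wt 𝒞 s' := by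
    unfold Wt
    omega
  have : s' + 1 + 2 = s' + 3 := by omega
  rw [this]
  omega

theorem tcoord_lt_DD {m s t : ℕ} (hm2 : 2 ≤ m) (hms : m ≤ s + 2) (hs : 1 ≤ s)
    (ht : Ctime 𝒞 s ≤ t) : tcoord t < DD 𝒞 / (4 * m) := by
  have hD := DD_pos 𝒞
  have hmr : (0:ℝ) < m := by positivity
  rw [tcoord_lt_iff (by positivity)]
  rw [one_div_div]
  have h1 : (K0 𝒞 : ℝ) * (s + 2) ≤ Ctime 𝒞 s := by
    have := Ctime_ge_K0 𝒞 hs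
    exact_mod_cast this
  have h2 : (4 / DD 𝒞) * (s + 2) ≤ (K0 𝒞 : ℝ) * (s + 2) := by
    apply mul_le_mul_of_nonneg_right (K0_ge 𝒞) (by positivity)
  have h3 : (4 / DD 𝒞) * m ≤ (4 / DD 𝒞) * (s + 2) := by
    apply mul_le_mul_of_nonneg_left _ (by positivity)
    have : (m:ℝ) ≤ (s:ℝ) + 2 := by exact_mod_cast hms
    linarith
  have h4 : (t:ℝ) ≥ Ctime 𝒞 s := by exact_mod_cast ht
  have : 4 * (m:ℝ) / DD 𝒞 = (4 / DD 𝒞) * m := by ring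
  rw [this]
  linarith

noncomputable def qx (m j : ℕ) : {a : Amb // a ∈ XS 𝒞} := cpt 𝒞 (q 𝒞 m j)

def Aset (m j : ℕ) : Set {a : Amb // a ∈ XS 𝒞} :=
  ⋂ j' ∈ (Finset.range m).erase j, {x | DD 𝒞 / (4 * m) < dist x (qx 𝒞 m j')}

theorem mem_Aset_iff {m j : ℕ} {x : {a : Amb // a ∈ XS 𝒞}} :
    x ∈ Aset 𝒞 m j ↔ ∀ j', j' < m → j' ≠ j → DD 𝒞 / (4 * m) < dist x (qx 𝒞 m j') := by
  unfold Aset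
  rw [Set.mem_iInter₂]
  constructor
  · intro h j' h1 h2
    exact h j' (Finset.mem_erase.mpr ⟨h2, Finset.mem_range.mpr h1⟩)
  · intro h j' hj'
    obtain ⟨h2, h1⟩ := Finset.mem_erase.mp hj'
    exact h j' (Finset.mem_range.mp h1) h2

theorem isOpen_Aset (m j : ℕ) : IsOpen (Aset 𝒞 m j) := by
  apply isOpen_biInter_finset
  intro j' _
  exact isOpen_lt continuous_const (Continuous.dist continuous_id continuous_const)

theorem dist_qx_qx {m j j' : ℕ} (hj : j < m) (hj' : j' < m) (hne : j ≠ j') :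
    DD 𝒞 / m ≤ dist (qx 𝒞 m j) (qx 𝒞 m j') := by
  unfold qx
  rw [dist_cpt_cpt]
  exact q_sep 𝒞 hj hj' hne

theorem mem_Aset_of_close {m j : ℕ} (hm : 2 ≤ m) (hj : j < m) {x : {a : Amb // a ∈ XS 𝒞}}
    (hd : dist x (qx 𝒞 m j) ≤ DD 𝒞 / (4 * m)) : x ∈ Aset 𝒞 m j := by
  rw [mem_Aset_iff]
  intro j' h1 h2
  have hsep : DD 𝒞 / m ≤ dist (qx 𝒞 m j) (qx 𝒞 m j') := dist_qx_qx 𝒞 hj h1 (fun h => h2 h.symm)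
  have htri : dist (qx 𝒞 m j) (qx 𝒞 m j') ≤ dist (qx 𝒞 m j) x + dist x (qx 𝒞 m j') :=
    dist_triangle _ _ _
  have hsym : dist (qx 𝒞 m j) x = dist x (qx 𝒞 m j) := dist_comm _ _
  have hexp : DD 𝒞 / (4 * m) = (DD 𝒞 / m) / 4 := by ring
  have hpos : 0 < DD 𝒞 / m := by
    have := DD_pos 𝒞
    have : (0:ℝ) < m := by positivity
    positivity
  rw [hexp] at hd ⊢
  linarith

theorem eq_of_mem_Aset {m j j' : ℕ} (hm : 2 ≤ m) (hj : j < m) (hj' : j' < m)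
    {x : {a : Amb // a ∈ XS 𝒞}} (hd : dist x (qx 𝒞 m j) < DD 𝒞 / (4 * m))
    (hx : x ∈ Aset 𝒞 m j') : j' = j := by
  by_contra hne
  have := (mem_Aset_iff 𝒞).mp hx j hj (fun h => hne h.symm)
  linarith

theorem Aset_inj {m j j' : ℕ} (hm : 2 ≤ m) (hj : j < m) (hj' : j' < m)
    (h : Aset 𝒞 m j = Aset 𝒞 m j') : j = j' := by
  have hpos : 0 < DD 𝒞 / (4 * m) := by
    have := DD_pos 𝒞
    have hmr : (0:ℝ) < m := by positivity
    positivity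
  have h0 : dist (qx 𝒞 m j) (qx 𝒞 m j) < DD 𝒞 / (4 * m) := by
    rw [dist_self]; exact hpos
  have hmem : qx 𝒞 m j ∈ Aset 𝒞 m j := mem_Aset_of_close 𝒞 hm hj h0.le
  rw [h] at hmem
  exact (eq_of_mem_Aset 𝒞 hm hj hj' h0 hmem).symm

noncomputable def Ucov (m : ℕ) : Finset (Set {a : Amb // a ∈ XS 𝒞}) :=
  letI : DecidableEq (Set {a : Amb // a ∈ XS 𝒞}) := Classical.decEq _
  (Finset.range m).image (Aset 𝒞 m)

theorem mem_Ucov {m : ℕ} {u : Set {a : Amb // a ∈ XS 𝒞}} :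
    u ∈ Ucov 𝒞 m ↔ ∃ j < m, Aset 𝒞 m j = u := by
  letI : DecidableEq (Set {a : Amb // a ∈ XS 𝒞}) := Classical.decEq _
  unfold Ucov
  rw [Finset.mem_image]
  constructor
  · rintro ⟨j, hj, rfl⟩
    exact ⟨j, Finset.mem_range.mp hj, rfl⟩
  · rintro ⟨j, hj, rfl⟩
    exact ⟨j, Finset.mem_range.mpr hj, rfl⟩

theorem isFiniteOpenCover_Ucov {m : ℕ} (hm : 2 ≤ m) : IsFiniteOpenCover (Ucov 𝒞 m) := by
  constructor
  · intro u hu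
    obtain ⟨j, _, rfl⟩ := (mem_Ucov 𝒞).mp hu
    exact isOpen_Aset 𝒞 m j
  · apply Set.eq_univ_of_forall
    intro x
    by_cases h : ∃ j, j < m ∧ dist x (qx 𝒞 m j) ≤ DD 𝒞 / (4 * m)
    · obtain ⟨j, hj, hd⟩ := h
      exact ⟨Aset 𝒞 m j, (mem_Ucov 𝒞).mpr ⟨j, hj, rfl⟩, mem_Aset_of_close 𝒞 hm hj hd⟩
    · push_neg at h
      refine ⟨Aset 𝒞 m 0, (mem_Ucov 𝒞).mpr ⟨0, by omega, rfl⟩, ?_⟩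
      rw [mem_Aset_iff]
      intro j' h1 _
      exact h j' h1

/-! ### the sequence a -/

noncomputable def aseq (x : ℕ) : ℕ :=
  ((x + 1 - 2 ^ Nat.log 2 (x + 1) + 1) * Lam 𝒞 (Nat.log 2 (x + 1)) - 1) *
    Wt 𝒞 (Nat.log 2 (x + 1))

theorem log2_eq {s i : ℕ} (hi : i < 2 ^ s) : Nat.log 2 (2 ^ s + i) = s :=
  Nat.log_eq_of_pow_le_of_lt_pow (Nat.le_add_right _ _) (by rw [pow_succ]; omega)

theorem aseq_at {s i : ℕ} (hi : i < 2 ^ s) :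
    aseq 𝒞 (2 ^ s - 1 + i) = ((i + 1) * Lam 𝒞 s - 1) * Wt 𝒞 s := by
  have h1 : (1:ℕ) ≤ 2 ^ s := Nat.one_le_two_pow
  have hx : 2 ^ s - 1 + i + 1 = 2 ^ s + i := by omega
  unfold aseq
  rw [hx, log2_eq hi]
  congr 3
  omega

theorem aseq_strictMono : StrictMono (aseq 𝒞) := by
  apply strictMono_nat_of_lt_succ
  intro x
  set s := Nat.log 2 (x + 1) with hs
  have h1 : 2 ^ s ≤ x + 1 := Nat.pow_log_le_self 2 (by omega)
  have h2 : x + 1 < 2 ^ (s + 1) := Nat.lt_pow_succ_log_self (by omega) _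
  set i := x + 1 - 2 ^ s with hi
  have hilt : i < 2 ^ s := by rw [pow_succ] at h2; omega
  have h1s : (1:ℕ) ≤ 2 ^ s := Nat.one_le_two_pow
  have hxx : x = 2 ^ s - 1 + i := by omega
  have hax : aseq 𝒞 x = ((i + 1) * Lam 𝒞 s - 1) * Wt 𝒞 s := by
    rw [hxx]; exact aseq_at 𝒞 hilt
  have hΛ := two_le_Lam 𝒞 s
  have hW := Wt_pos 𝒞 s
  rcases Nat.lt_or_ge (i + 1) (2 ^ s) with hA | hB
  · have hx1 : x + 1 = 2 ^ s - 1 + (i + 1) := by omega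
    have ha1 : aseq 𝒞 (x + 1) = ((i + 1 + 1) * Lam 𝒞 s - 1) * Wt 𝒞 s := by
      rw [hx1]; exact aseq_at 𝒞 hA
    rw [ha1, hax]
    apply (Nat.mul_lt_mul_right hW).mpr
    have e1 : (i + 1 + 1) * Lam 𝒞 s = (i + 1) * Lam 𝒞 s + Lam 𝒞 s := by ring
    have e2 : 1 * 1 ≤ (i + 1) * Lam 𝒞 s := Nat.mul_le_mul (by omega) (by omega)
    omega
  · have hieq : i + 1 = 2 ^ s := by omega
    have hx1 : x + 1 = 2 ^ (s + 1) - 1 + 0 := by rw [pow_succ]; omega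
    have ha1 : aseq 𝒞 (x + 1) = ((0 + 1) * Lam 𝒞 (s + 1) - 1) * Wt 𝒞 (s + 1) := by
      rw [hx1]; exact aseq_at 𝒞 (by positivity)
    rw [ha1, hax]
    have hΛ1 := two_le_Lam 𝒞 (s + 1)
    have hW1 := Wt_pos 𝒞 (s + 1)
    have key1 : Wt 𝒞 (s + 1) ≤ ((0 + 1) * Lam 𝒞 (s + 1) - 1) * Wt 𝒞 (s + 1) := by
      have : 1 ≤ (0 + 1) * Lam 𝒞 (s + 1) - 1 := by omega
      calc Wt 𝒞 (s + 1) = 1 * Wt 𝒞 (s + 1) := by ring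
        _ ≤ ((0 + 1) * Lam 𝒞 (s + 1) - 1) * Wt 𝒞 (s + 1) := Nat.mul_le_mul_right _ this
    have key2 : Ctime 𝒞 (s + 1) < Wt 𝒞 (s + 1) := by
      have := base_le_Wt 𝒞 (s + 1)
      omega
    have key3 : Gam 𝒞 s * Wt 𝒞 s ≤ Ctime 𝒞 (s + 1) := by rw [Ctime_succ]; omega
    have key4 : ((i + 1) * Lam 𝒞 s - 1) * Wt 𝒞 s < Gam 𝒞 s * Wt 𝒞 s := by
      apply (Nat.mul_lt_mul_right hW).mpr
      have hb1 : (i + 1) * Lam 𝒞 s ≤ blkLen 𝒞 s := by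
        have hnsel : nsel s = 2 ^ s := rfl
        have : blkLen 𝒞 s = (nsel s + 1) * Lam 𝒞 s := rfl
        rw [this, hnsel, hieq]
        exact Nat.mul_le_mul_right _ (by omega)
      have hG := blkLen_le_Gam 𝒞 s
      have hb := blkLen_pos 𝒞 s
      have e2 : 1 * 1 ≤ (i + 1) * Lam 𝒞 s := Nat.mul_le_mul (by omega) (by omega)
      omega
    omega

/-! ### the visit equation -/

theorem orbit_visit {s π i : ℕ} (hπ : π < Bnum s) (hi : i < 2 ^ s) :
    cseq 𝒞 (Tt 𝒞 (gcum 𝒞 s + blkLen 𝒞 s * π) + aseq 𝒞 (2 ^ s - 1 + i)) =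
      q 𝒞 (msel s) (dig (msel s) π i) := by
  rw [aseq_at 𝒞 hi]
  have hΛ := two_le_Lam 𝒞 s
  have hb := blkLen_pos 𝒞 s
  have hnsel : nsel s = 2 ^ s := rfl
  have hilt' : i < nsel s := by rw [hnsel]; exact hi
  have hinner : (i + 1) * Lam 𝒞 s - 1 < blkLen 𝒞 s := by
    have h1 : (i + 1) * Lam 𝒞 s ≤ nsel s * Lam 𝒞 s := Nat.mul_le_mul_right _ (by omega)
    have h2 : blkLen 𝒞 s = (nsel s + 1) * Lam 𝒞 s := rfl
    have h3 : (nsel s + 1) * Lam 𝒞 s = nsel s * Lam 𝒞 s + Lam 𝒞 s := by ring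
    omega
  have hGeq : Gam 𝒞 s = Bnum s * blkLen 𝒞 s := rfl
  have hlt1 : blkLen 𝒞 s * π < Gam 𝒞 s := by
    rw [hGeq]
    calc blkLen 𝒞 s * π < blkLen 𝒞 s * π + blkLen 𝒞 s := by omega
      _ = blkLen 𝒞 s * (π + 1) := by ring
      _ ≤ blkLen 𝒞 s * Bnum s := Nat.mul_le_mul_left _ (by omega)
      _ = Bnum s * blkLen 𝒞 s := by ring
  have hlt2 : blkLen 𝒞 s * π + ((i + 1) * Lam 𝒞 s - 1) < Gam 𝒞 s := by
    rw [hGeq]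
    calc blkLen 𝒞 s * π + ((i + 1) * Lam 𝒞 s - 1) < blkLen 𝒞 s * π + blkLen 𝒞 s := by omega
      _ = blkLen 𝒞 s * (π + 1) := by ring
      _ ≤ blkLen 𝒞 s * Bnum s := Nat.mul_le_mul_left _ (by omega)
      _ = Bnum s * blkLen 𝒞 s := by ring
  rw [Tt_stage 𝒞 hlt1]
  have hsum : Ctime 𝒞 s + blkLen 𝒞 s * π * Wt 𝒞 s + ((i + 1) * Lam 𝒞 s - 1) * Wt 𝒞 s =
      Tt 𝒞 (gcum 𝒞 s + (blkLen 𝒞 s * π + ((i + 1) * Lam 𝒞 s - 1))) := by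
    rw [Tt_stage 𝒞 hlt2]
    have e0 : (blkLen 𝒞 s * π + ((i + 1) * Lam 𝒞 s - 1)) * Wt 𝒞 s =
        blkLen 𝒞 s * π * Wt 𝒞 s + ((i + 1) * Lam 𝒞 s - 1) * Wt 𝒞 s := Nat.add_mul _ _ _
    omega
  rw [hsum, cseq_Tt]
  have hidx : blkLen 𝒞 s * π + ((i + 1) * Lam 𝒞 s - 1) =
      i * Lam 𝒞 s + (Lam 𝒞 s - 1) + blkLen 𝒞 s * π := by
    have : (i + 1) * Lam 𝒞 s = i * Lam 𝒞 s + Lam 𝒞 s := by ring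
    omega
  rw [hidx, gpath_visit 𝒞 hπ (le_of_lt hilt')]
  unfold node nodeDig
  have h1 : ¬(i + 1 = 0 ∨ i + 1 = nsel s + 1) := by
    rw [hnsel]
    omega
  rw [if_neg h1]
  simp

/-! ### coverNum lower bound -/

theorem coverNum_lower {m : ℕ} (hm : 2 ≤ m) {s : ℕ} (hms : msel s = m) (hs : 1 ≤ s) :
    m ^ 2 ^ s ≤
      coverNum (preRefine (fun i => (TX 𝒞)^[aseq 𝒞 i]) (2 ^ (s + 1) - 1) (Ucov 𝒞 m)) := by
  classical
  set N := 2 ^ (s + 1) - 1 with hN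
  have hcovU : ⋃₀ ((Ucov 𝒞 m : Finset (Set {a : Amb // a ∈ XS 𝒞})) :
      Set (Set {a : Amb // a ∈ XS 𝒞})) = Set.univ :=
    (isFiniteOpenCover_Ucov 𝒞 hm).2
  obtain ⟨Wc, hWsub, hWcard, hWcov⟩ :=
    exists_min_subcover (V := preRefine (fun i => (TX 𝒞)^[aseq 𝒞 i]) N (Ucov 𝒞 m))
      (sUnion_preRefine hcovU)
  rw [← hWcard]
  have hbls : ∀ π, π < Bnum s → blkLen 𝒞 s * π < Gam 𝒞 s := by
    intro π hπ
    have hb := blkLen_pos 𝒞 s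
    have hGeq : Gam 𝒞 s = Bnum s * blkLen 𝒞 s := rfl
    rw [hGeq]
    calc blkLen 𝒞 s * π < blkLen 𝒞 s * π + blkLen 𝒞 s := by omega
      _ = blkLen 𝒞 s * (π + 1) := by ring
      _ ≤ blkLen 𝒞 s * Bnum s := Nat.mul_le_mul_left _ (by omega)
      _ = Bnum s * blkLen 𝒞 s := by ring
  have hchoice : ∀ π : ℕ, ∃ w, w ∈ Wc ∧ xpt 𝒞 (Tt 𝒞 (gcum 𝒞 s + blkLen 𝒞 s * π)) ∈ w := by
    intro π
    have : xpt 𝒞 (Tt 𝒞 (gcum 𝒞 s + blkLen 𝒞 s * π)) ∈ ⋃₀ (Wc : Set (Set _)) := by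
      rw [hWcov]; trivial
    obtain ⟨w, h1, h2⟩ := this
    exact ⟨w, h1, h2⟩
  choose wf hwfmem hwfpt using hchoice
  have hBnum : Bnum s = m ^ 2 ^ s := by
    have : Bnum s = msel s ^ nsel s := rfl
    rw [this, hms]
    rfl
  have hinj : Set.InjOn wf ↑(Finset.range (Bnum s)) := by
    intro π1 h1 π2 h2 heq
    rw [Finset.coe_range, Set.mem_Iio] at h1 h2
    obtain ⟨cc, hcc⟩ := (mem_preRefine_iff).mp (hWsub (hwfmem π1))
    have hri : ∀ i, i < 2 ^ s → 2 ^ s - 1 + i < N := by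
      intro i hi
      have := Nat.one_le_two_pow (n := s)
      rw [hN, pow_succ]
      omega
    have hdig : ∀ ρ, ρ < Bnum s → wf ρ = wf π1 → ∀ i, ∀ hi : i < 2 ^ s,
        ((cc ⟨2 ^ s - 1 + i, hri i hi⟩ : Set _)) = Aset 𝒞 m (dig m ρ i) := by
      intro ρ hρ hwe i hi
      have hy : xpt 𝒞 (Tt 𝒞 (gcum 𝒞 s + blkLen 𝒞 s * ρ)) ∈ wf π1 := by
        rw [← hwe]; exact hwfpt ρ
      rw [hcc] at hy
      have hy2 := Set.mem_iInter.mp hy ⟨2 ^ s - 1 + i, hri i hi⟩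
      rw [Set.mem_preimage] at hy2
      rw [TX_iter_xpt] at hy2
      set t0 := Tt 𝒞 (gcum 𝒞 s + blkLen 𝒞 s * ρ) + aseq 𝒞 (2 ^ s - 1 + i) with ht0
      have hcs : cseq 𝒞 t0 = q 𝒞 m (dig m ρ i) := by
        rw [ht0]
        have := orbit_visit 𝒞 hρ hi
        rwa [hms] at this
      have ht0ge : Ctime 𝒞 s ≤ t0 := by
        rw [ht0, Tt_stage 𝒞 (hbls ρ hρ)]
        omega
      have hdist : dist (xpt 𝒞 t0) (qx 𝒞 m (dig m ρ i)) < DD 𝒞 / (4 * m) := by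
        unfold qx
        rw [dist_xpt_cpt, hcs, dist_self]
        rw [max_eq_right (tcoord_pos t0).le]
        exact tcoord_lt_DD 𝒞 hm (hms ▸ msel_le s) hs ht0ge
      obtain ⟨j', hj', hAj⟩ := (mem_Ucov 𝒞).mp (cc ⟨2 ^ s - 1 + i, hri i hi⟩).2
      have hj'eq : j' = dig m ρ i := by
        apply eq_of_mem_Aset 𝒞 hm (dig_lt (by omega) ρ i) hj' hdist
        rw [hAj]
        exact hy2
      rw [← hAj, hj'eq]
    have hd1 := hdig π1 h1 rfl
    have hd2 := hdig π2 h2 heq.symm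
    apply dig_inj hm (2 ^ s) π1 π2 (by rw [← hBnum]; exact h1) (by rw [← hBnum]; exact h2)
    intro i hi
    have hAeq : Aset 𝒞 m (dig m π1 i) = Aset 𝒞 m (dig m π2 i) :=
      (hd1 i hi).symm.trans (hd2 i hi)
    exact Aset_inj 𝒞 hm (dig_lt (by omega) _ _) (dig_lt (by omega) _ _) hAeq
  calc m ^ 2 ^ s = (Finset.range (Bnum s)).card := by rw [Finset.card_range, hBnum]
    _ ≤ Wc.card := Finset.card_le_card_of_injOn wf (fun π _ => hwfmem π) hinj

theorem seqEntropyOfCover_lower {m : ℕ} (hm : 2 ≤ m) :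
    ENNReal.ofReal (Real.log m / 2) ≤ seqEntropyOfCover (TX 𝒞) (aseq 𝒞) (Ucov 𝒞 m) := by
  unfold seqEntropyOfCover
  apply Filter.le_limsup_of_frequently_le'
  rw [Filter.frequently_atTop]
  intro n₀
  obtain ⟨s, hs₀, hms⟩ := msel_surj m hm (max 1 n₀)
  have hs1 : 1 ≤ s := le_trans (le_max_left _ _) hs₀
  have hsn : n₀ ≤ 2 ^ (s + 1) - 1 := by
    have h1 : s < 2 ^ s := Nat.lt_two_pow_self
    have h2 : n₀ ≤ s := le_trans (le_max_right _ _) hs₀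
    rw [pow_succ]
    omega
  refine ⟨2 ^ (s + 1) - 1, hsn, ?_⟩
  have hlow := coverNum_lower 𝒞 hm hms hs1
  set cn := coverNum (preRefine (fun i => (TX 𝒞)^[aseq 𝒞 i]) (2 ^ (s + 1) - 1) (Ucov 𝒞 m))
    with hcn
  apply ENNReal.ofReal_le_ofReal
  have hpow1 : (1:ℕ) ≤ m ^ 2 ^ s := Nat.one_le_pow _ _ (by omega)
  have hcn1 : (1:ℝ) ≤ (cn:ℝ) := by
    have : (1:ℕ) ≤ cn := le_trans hpow1 hlow
    exact_mod_cast this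
  have hlogm : 0 ≤ Real.log m := Real.log_nonneg (by exact_mod_cast (by omega : 1 ≤ m))
  have hlog : (2 ^ s : ℝ) * Real.log m ≤ Real.log cn := by
    have hc1 : ((m : ℝ)) ^ (2 ^ s : ℕ) ≤ (cn : ℝ) := by
      have : ((m ^ 2 ^ s : ℕ) : ℝ) ≤ (cn : ℝ) := by exact_mod_cast hlow
      rwa [Nat.cast_pow] at this
    calc (2 ^ s : ℝ) * Real.log m = Real.log ((m:ℝ) ^ (2 ^ s : ℕ)) := by
          rw [Real.log_pow]
          norm_num
      _ ≤ Real.log cn := Real.log_le_log (by positivity) hc1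
  have hNpos : (0:ℝ) < ((2 ^ (s + 1) - 1 : ℕ) : ℝ) := by
    have : (1:ℕ) ≤ 2 ^ (s + 1) - 1 := by
      have := Nat.one_le_two_pow (n := s + 1)
      have h1 : (2:ℕ) ≤ 2 ^ (s + 1) := by
        calc (2:ℕ) = 2 ^ 1 := rfl
          _ ≤ 2 ^ (s + 1) := Nat.pow_le_pow_right (by omega) (by omega)
      omega
    exact_mod_cast Nat.lt_of_lt_of_le Nat.zero_lt_one this
  rw [div_le_div_iff₀ (by norm_num) hNpos]
  have hNle : ((2 ^ (s + 1) - 1 : ℕ) : ℝ) ≤ 2 * (2 ^ s : ℝ) := by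
    have h1 : (2 ^ (s + 1) - 1 : ℕ) ≤ 2 ^ (s + 1) := Nat.sub_le _ _
    have h2 : ((2 ^ (s + 1) : ℕ) : ℝ) = 2 * (2 ^ s : ℝ) := by
      push_cast
      ring
    calc ((2 ^ (s + 1) - 1 : ℕ) : ℝ) ≤ ((2 ^ (s + 1) : ℕ) : ℝ) := by exact_mod_cast h1
      _ = 2 * (2 ^ s : ℝ) := h2
  calc Real.log m * ((2 ^ (s + 1) - 1 : ℕ) : ℝ) ≤ Real.log m * (2 * (2 ^ s : ℝ)) := by
        apply mul_le_mul_of_nonneg_left hNle hlogm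
    _ = (2 ^ s : ℝ) * Real.log m * 2 := by ring
    _ ≤ Real.log cn * 2 := by linarith

theorem supSeqEntropy_top : supSeqEntropy (TX 𝒞) = ⊤ := by
  rw [eq_top_iff]
  have hstep : ∀ m : ℕ, 2 ≤ m →
      ENNReal.ofReal (Real.log m / 2) ≤ supSeqEntropy (TX 𝒞) := by
    intro m hm
    calc ENNReal.ofReal (Real.log m / 2)
        ≤ seqEntropyOfCover (TX 𝒞) (aseq 𝒞) (Ucov 𝒞 m) := seqEntropyOfCover_lower 𝒞 hm
      _ ≤ seqEntropy (TX 𝒞) (aseq 𝒞) := by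
          unfold seqEntropy
          exact le_iSup₂ (f := fun (U : Finset (Set {a : Amb // a ∈ XS 𝒞}))
            (_ : IsFiniteOpenCover U) => seqEntropyOfCover (TX 𝒞) (aseq 𝒞) U)
            (Ucov 𝒞 m) (isFiniteOpenCover_Ucov 𝒞 hm)
      _ ≤ supSeqEntropy (TX 𝒞) := by
          unfold supSeqEntropy
          exact le_iSup₂ (f := fun (a : ℕ → ℕ) (_ : StrictMono a) => seqEntropy (TX 𝒞) a)
            (aseq 𝒞) (aseq_strictMono 𝒞)
  have h2 : ∀ n : ℕ, (n : ℝ≥0∞) ≤ supSeqEntropy (TX 𝒞) := by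
    intro n
    set m : ℕ := max 2 ⌈Real.exp ((2 * n : ℕ) : ℝ)⌉₊ with hmdef
    have hm2 : 2 ≤ m := le_max_left _ _
    have hexp : Real.exp ((2 * n : ℕ) : ℝ) ≤ (m : ℝ) := by
      calc Real.exp ((2 * n : ℕ) : ℝ) ≤ (⌈Real.exp ((2 * n : ℕ) : ℝ)⌉₊ : ℝ) := Nat.le_ceil _
        _ ≤ (m : ℝ) := Nat.cast_le.mpr (le_max_right _ _)
    have hlog : 2 * (n : ℝ) ≤ Real.log m := by
      have h := Real.log_le_log (Real.exp_pos _) hexp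
      rw [Real.log_exp] at h
      push_cast at h
      linarith
    calc (n : ℝ≥0∞) = ENNReal.ofReal (n : ℝ) := by rw [ENNReal.ofReal_natCast]
      _ ≤ ENNReal.ofReal (Real.log m / 2) := ENNReal.ofReal_le_ofReal (by linarith)
      _ ≤ _ := hstep m hm2
  calc (⊤ : ℝ≥0∞) = ⨆ n : ℕ, (n : ℝ≥0∞) := ENNReal.iSup_natCast.symm
    _ ≤ supSeqEntropy (TX 𝒞) := iSup_le h2

/-! ### upper bound -/

noncomputable def sstar (n : ℕ) : ℕ := Nat.find (⟨n, le_Wt 𝒞 n⟩ : ∃ s, n ≤ Wt 𝒞 s)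

theorem le_Wt_sstar (n : ℕ) : n ≤ Wt 𝒞 (sstar 𝒞 n) := by
  unfold sstar
  exact Nat.find_spec (⟨n, le_Wt 𝒞 n⟩ : ∃ s, n ≤ Wt 𝒞 s)

theorem Wt_lt_of_lt_sstar {n s : ℕ} (h : s < sstar 𝒞 n) : Wt 𝒞 s < n := by
  unfold sstar at h
  have := Nat.find_min (⟨n, le_Wt 𝒞 n⟩ : ∃ s, n ≤ Wt 𝒞 s) h
  omega

theorem le_Wt_of_sstar_le {n s : ℕ} (h : sstar 𝒞 n ≤ s) : n ≤ Wt 𝒞 s :=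
  le_trans (le_Wt_sstar 𝒞 n) (Wt_mono 𝒞 h)

theorem Ctime_sstar_le (n : ℕ) : Ctime 𝒞 (sstar 𝒞 n) ≤ n * n := by
  rcases Nat.eq_zero_or_pos (sstar 𝒞 n) with h0 | hpos
  · rw [h0, Ctime_zero]
    exact Nat.zero_le _
  · obtain ⟨s', hs'⟩ : ∃ s', sstar 𝒞 n = s' + 1 := ⟨sstar 𝒞 n - 1, by omega⟩
    have hW : Wt 𝒞 s' < n := Wt_lt_of_lt_sstar 𝒞 (by omega)
    rw [hs']
    calc Ctime 𝒞 (s' + 1) ≤ Wt 𝒞 s' * Wt 𝒞 s' := Ctime_succ_le_sq 𝒞 s'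
      _ ≤ n * n := Nat.mul_le_mul hW.le hW.le

theorem no_two_changes {n k τ₁ τ₂ : ℕ} (hk : Ctime 𝒞 (sstar 𝒞 n) ≤ k)
    (h1 : k < τ₁) (h12 : τ₁ < τ₂) (h2 : τ₂ < k + n)
    (hc1 : cseq 𝒞 (τ₁ - 1) ≠ cseq 𝒞 τ₁) (hc2 : cseq 𝒞 (τ₂ - 1) ≠ cseq 𝒞 τ₂) : False := by
  have key : ∀ τ, 1 ≤ τ → cseq 𝒞 (τ - 1) ≠ cseq 𝒞 τ → τ = Tt 𝒞 (jOf 𝒞 τ) := by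
    intro τ hτ hc
    have hτ1 : τ - 1 + 1 = τ := by omega
    have := cseq_change (t := τ - 1) (𝒞 := 𝒞) (by rw [hτ1]; exact hc)
    rw [hτ1] at this
    exact this.2
  have e1 : τ₁ = Tt 𝒞 (jOf 𝒞 τ₁) := key τ₁ (by omega) hc1
  have e2 : τ₂ = Tt 𝒞 (jOf 𝒞 τ₂) := key τ₂ (by omega) hc2
  have hj12 : jOf 𝒞 τ₁ < jOf 𝒞 τ₂ := by
    by_contra hc
    push_neg at hc
    have := Tt_mono 𝒞 hc
    omega
  have hstage : sstar 𝒞 n ≤ sOf 𝒞 (jOf 𝒞 τ₁) := stage_time_ge 𝒞 (by omega)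
  have hWn : n ≤ Wt 𝒞 (sOf 𝒞 (jOf 𝒞 τ₁)) := le_Wt_of_sstar_le 𝒞 hstage
  have hTsucc : Tt 𝒞 (jOf 𝒞 τ₁ + 1) = Tt 𝒞 (jOf 𝒞 τ₁) + Wt 𝒞 (sOf 𝒞 (jOf 𝒞 τ₁)) :=
    Tt_succ 𝒞 _
  have hmono : Tt 𝒞 (jOf 𝒞 τ₁ + 1) ≤ Tt 𝒞 (jOf 𝒞 τ₂) := Tt_mono 𝒞 hj12
  omega

theorem window_structure {n k : ℕ} (hk : Ctime 𝒞 (sstar 𝒞 n) ≤ k) :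
    ∃ o, o ≤ n ∧ ∀ i, i < n →
      cseq 𝒞 (k + i) = if i < o then cseq 𝒞 k else cseq 𝒞 (k + o) := by
  classical
  by_cases hall : ∀ i, i < n → cseq 𝒞 (k + i) = cseq 𝒞 k
  · exact ⟨n, le_rfl, fun i hi => by rw [if_pos hi]; exact hall i hi⟩
  · push_neg at hall
    have hex : ∃ i, i < n ∧ cseq 𝒞 (k + i) ≠ cseq 𝒞 k := hall
    set o := Nat.find hex with ho
    obtain ⟨hon, hone⟩ := Nat.find_spec hex
    have homin : ∀ i, i < o → i < n → cseq 𝒞 (k + i) = cseq 𝒞 k := by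
      intro i hio hin
      by_contra hc
      exact Nat.find_min hex hio ⟨hin, hc⟩
    have ho1 : 1 ≤ o := by
      rcases Nat.eq_zero_or_pos o with h | h
      · exfalso
        apply hone
        rw [show k + o = k from by omega]
      · exact h
    have hchange1 : cseq 𝒞 (k + o - 1) ≠ cseq 𝒞 (k + o) := by
      have hprev : cseq 𝒞 (k + (o - 1)) = cseq 𝒞 k := homin (o - 1) (by omega) (by omega)
      have heq : k + o - 1 = k + (o - 1) := by omega
      rw [heq, hprev]
      exact fun h => hone h.symm
    have hconst : ∀ i, o ≤ i → i < n → cseq 𝒞 (k + i) = cseq 𝒞 (k + o) := by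
      intro i
      induction i with
      | zero =>
        intro h0 _
        exact absurd h0 (by omega)
      | succ i ih =>
        intro hoi hin
        rcases Nat.lt_or_ge i o with h | h
        · have : i + 1 = o := by omega
          rw [this]
        · have hi' : cseq 𝒞 (k + i) = cseq 𝒞 (k + o) := ih h (by omega)
          by_contra hc
          have hchange2 : cseq 𝒞 (k + i + 1 - 1) ≠ cseq 𝒞 (k + i + 1) := by
            have heq : k + i + 1 - 1 = k + i := by omega
            rw [heq]
            intro hcc
            apply hc
            calc cseq 𝒞 (k + (i + 1)) = cseq 𝒞 (k + i) := by
                  rw [show k + (i + 1) = k + i + 1 from rfl, ← hcc]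
              _ = cseq 𝒞 (k + o) := hi'
          exact no_two_changes 𝒞 hk (τ₁ := k + o) (τ₂ := k + i + 1) (by omega) (by omega)
            (by omega) hchange1 hchange2
    refine ⟨o, by omega, ?_⟩
    intro i hi
    by_cases hio : i < o
    · rw [if_pos hio]
      exact homin i hio hi
    · rw [if_neg hio]
      exact hconst i (by omega) hi

theorem coverNum_upper (U : Finset (Set {a : Amb // a ∈ XS 𝒞})) (hU : IsFiniteOpenCover U) :
    ∃ C : ℕ, ∀ n : ℕ,
      coverNum (preRefine (fun i => (TX 𝒞)^[i]) n U) ≤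
        U.card + (n * n + C) + U.card * U.card * (n + 1) := by
  classical
  haveI := compactSpace_X 𝒞
  have hXcompact : IsCompact (Set.univ : Set {a : Amb // a ∈ XS 𝒞}) := isCompact_univ
  have hcov : (Set.univ : Set {a : Amb // a ∈ XS 𝒞}) ⊆
      ⋃ u : {u : Set {a : Amb // a ∈ XS 𝒞} // u ∈ U}, (u : Set {a : Amb // a ∈ XS 𝒞}) := by
    intro x _
    have : x ∈ ⋃₀ (U : Set (Set {a : Amb // a ∈ XS 𝒞})) := by rw [hU.2]; trivial
    obtain ⟨u, hu, hx⟩ := this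
    exact Set.mem_iUnion.mpr ⟨⟨u, hu⟩, hx⟩
  obtain ⟨δ, hδ, hLeb⟩ := lebesgue_number_lemma_of_metric hXcompact
    (fun u : {u : Set {a : Amb // a ∈ XS 𝒞} // u ∈ U} => hU.1 u u.2) hcov
  choose FC hFC using fun z : 𝒞 => hLeb (cpt 𝒞 z) (Set.mem_univ _)
  choose FX hFX using fun x : {a : Amb // a ∈ XS 𝒞} => hLeb x (Set.mem_univ _)
  obtain ⟨sel, hselmem, hselF⟩ : ∃ sel : ℕ → {u : Set {a : Amb // a ∈ XS 𝒞} // u ∈ U},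
      (∀ t, xpt 𝒞 t ∈ (sel t : Set {a : Amb // a ∈ XS 𝒞})) ∧
      (∀ t, tcoord t < δ → sel t = FC (cseq 𝒞 t)) := by
    refine ⟨fun t => if h : tcoord t < δ then FC (cseq 𝒞 t) else FX (xpt 𝒞 t), ?_, ?_⟩
    · intro t
      by_cases h : tcoord t < δ
      · simp only [dif_pos h]
        apply hFC
        rw [Metric.mem_ball, dist_xpt_cpt, dist_self, max_eq_right (tcoord_pos t).le]
        exact h
      · simp only [dif_neg h]
        exact hFX (xpt 𝒞 t) (Metric.mem_ball_self hδ)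
    · intro t h
      simp only [dif_pos h]
  obtain ⟨Kd, hKd⟩ : ∃ Kd : ℕ, ∀ t, Kd ≤ t → tcoord t < δ := by
    obtain ⟨K, hK⟩ := exists_nat_gt (1 / δ)
    refine ⟨K, fun t ht => ?_⟩
    rw [tcoord_lt_iff hδ]
    have h1 : (K : ℝ) ≤ t := by exact_mod_cast ht
    linarith
  refine ⟨Kd, ?_⟩
  intro n
  set M := Ctime 𝒞 (sstar 𝒞 n) + Kd with hM
  set Ek : ℕ → Set {a : Amb // a ∈ XS 𝒞} := fun k =>
    ⋂ i : Fin n, ((TX 𝒞)^[(i : ℕ)])⁻¹' ((sel (k + (i : ℕ)) : Set {a : Amb // a ∈ XS 𝒞}))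
    with hEk
  set gf : {u : Set {a : Amb // a ∈ XS 𝒞} // u ∈ U} ×
      ({u : Set {a : Amb // a ∈ XS 𝒞} // u ∈ U} × ℕ) → Set {a : Amb // a ∈ XS 𝒞} := fun p =>
    ⋂ i : Fin n, ((TX 𝒞)^[(i : ℕ)])⁻¹'
      (((if (i : ℕ) < p.2.2 then p.1 else p.2.1) : {u : Set {a : Amb // a ∈ XS 𝒞} // u ∈ U}) :
        Set {a : Amb // a ∈ XS 𝒞}) with hgf
  set F1 : Finset (Set {a : Amb // a ∈ XS 𝒞}) := U.attach.image
    (fun u : {u : Set {a : Amb // a ∈ XS 𝒞} // u ∈ U} =>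
      ⋂ i : Fin n, ((TX 𝒞)^[(i : ℕ)])⁻¹' (u : Set {a : Amb // a ∈ XS 𝒞})) with hF1
  set F2 : Finset (Set {a : Amb // a ∈ XS 𝒞}) := (Finset.range M).image Ek with hF2
  set F3 : Finset (Set {a : Amb // a ∈ XS 𝒞}) :=
    (U.attach ×ˢ U.attach ×ˢ Finset.range (n + 1)).image gf with hF3
  set W' := F1 ∪ F2 ∪ F3 with hW'
  have hsub : W' ⊆ preRefine (fun i => (TX 𝒞)^[i]) n U := by
    intro A hA
    rw [hW', Finset.mem_union, Finset.mem_union] at hA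
    rcases hA with (hA | hA) | hA
    · obtain ⟨u, _, rfl⟩ := Finset.mem_image.mp hA
      exact mem_preRefine (fun _ => u)
    · obtain ⟨k, _, rfl⟩ := Finset.mem_image.mp hA
      exact mem_preRefine (fun i => sel (k + (i : ℕ)))
    · obtain ⟨p, _, rfl⟩ := Finset.mem_image.mp hA
      exact mem_preRefine (fun i => if (i : ℕ) < p.2.2 then p.1 else p.2.1)
  have hcover : ⋃₀ (W' : Set (Set {a : Amb // a ∈ XS 𝒞})) = Set.univ := by
    apply Set.eq_univ_of_forall
    intro x
    rw [Set.mem_sUnion]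
    rcases x.2 with hx | hx
    · -- x in C0
      have hxC : x ∈ C0set 𝒞 := hx
      have : x ∈ ⋃₀ (U : Set (Set {a : Amb // a ∈ XS 𝒞})) := by rw [hU.2]; trivial
      obtain ⟨u, hu, hxu⟩ := this
      refine ⟨⋂ i : Fin n, ((TX 𝒞)^[(i : ℕ)])⁻¹' ((⟨u, hu⟩ :
        {u : Set {a : Amb // a ∈ XS 𝒞} // u ∈ U}) : Set {a : Amb // a ∈ XS 𝒞}), ?_, ?_⟩
      · apply Finset.mem_coe.mpr
        rw [hW', Finset.mem_union, Finset.mem_union]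
        left; left
        rw [hF1, Finset.mem_image]
        exact ⟨⟨u, hu⟩, Finset.mem_attach _ _, rfl⟩
      · rw [Set.mem_iInter]
        intro i
        rw [Set.mem_preimage, TX_iter_fixes_C0 𝒞 hxC]
        exact hxu
    · -- x on the orbit
      obtain ⟨k, hk⟩ := hx
      have hxk : x = xpt 𝒞 k := Subtype.ext hk.symm
      have hxEk : x ∈ Ek k := by
        rw [hxk, hEk, Set.mem_iInter]
        intro i
        rw [Set.mem_preimage, TX_iter_xpt]
        exact hselmem (k + (i : ℕ))
      rcases Nat.lt_or_ge k M with hkM | hkM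
      · refine ⟨Ek k, ?_, hxEk⟩
        apply Finset.mem_coe.mpr
        rw [hW', Finset.mem_union, Finset.mem_union]
        left; right
        rw [hF2, Finset.mem_image]
        exact ⟨k, Finset.mem_range.mpr hkM, rfl⟩
      · obtain ⟨o, hon, hoc⟩ := window_structure 𝒞 (n := n) (k := k) (by omega)
        have hkd : ∀ j : ℕ, tcoord (k + j) < δ := fun j => hKd _ (by omega)
        have hEkeq : Ek k = gf (sel k, sel (k + o), o) := by
          rw [hEk, hgf]
          apply Set.iInter_congr
          intro i
          have hsel_eq : sel (k + (i : ℕ)) =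
              (if (i : ℕ) < o then sel k else sel (k + o)) := by
            have h1 : sel (k + (i : ℕ)) = FC (cseq 𝒞 (k + (i : ℕ))) := hselF _ (hkd _)
            have h2 : cseq 𝒞 (k + (i : ℕ)) =
                if (i : ℕ) < o then cseq 𝒞 k else cseq 𝒞 (k + o) := hoc _ i.2
            by_cases hio : (i : ℕ) < o
            · rw [h1, h2, if_pos hio, if_pos hio]
              have hk0 : tcoord k < δ := by
                have := hkd 0
                simpa using this
              rw [← hselF k hk0]
            · rw [h1, h2, if_neg hio, if_neg hio, ← hselF (k + o) (hkd o)]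
          rw [hsel_eq]
        refine ⟨gf (sel k, sel (k + o), o), ?_, by rw [← hEkeq]; exact hxEk⟩
        apply Finset.mem_coe.mpr
        rw [hW', Finset.mem_union]
        right
        rw [hF3, Finset.mem_image]
        refine ⟨(sel k, sel (k + o), o), ?_, rfl⟩
        rw [Finset.mem_product, Finset.mem_product]
        have ho1 : o < n + 1 := by omega
        exact ⟨Finset.mem_attach _ _, Finset.mem_attach _ _, Finset.mem_range.mpr ho1⟩
  have hcard : W'.card ≤ U.card + M + U.card * U.card * (n + 1) := by
    have h1 : F1.card ≤ U.card := by
      rw [hF1]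
      exact le_trans Finset.card_image_le (le_of_eq (Finset.card_attach))
    have h2 : F2.card ≤ M := by
      rw [hF2]
      exact le_trans Finset.card_image_le (le_of_eq (Finset.card_range M))
    have h3 : F3.card ≤ U.card * (U.card * (n + 1)) := by
      rw [hF3]
      refine le_trans Finset.card_image_le ?_
      rw [Finset.card_product, Finset.card_product, Finset.card_attach, Finset.card_range]
    have h4 : W'.card ≤ (F1 ∪ F2).card + F3.card := Finset.card_union_le _ _
    have h5 : (F1 ∪ F2).card ≤ F1.card + F2.card := Finset.card_union_le _ _
    have h6 : U.card * (U.card * (n + 1)) = U.card * U.card * (n + 1) := by ring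
    omega
  have hM2 : M ≤ n * n + Kd := by
    have := Ctime_sstar_le 𝒞 n
    omega
  have hfin := coverNum_le_card hsub hcover
  omega

theorem log_nat_mono {a b : ℕ} (hab : a ≤ b) (hb : 1 ≤ b) :
    Real.log a ≤ Real.log b := by
  rcases Nat.eq_zero_or_pos a with h | h
  · rw [h]
    simp only [Nat.cast_zero, Real.log_zero]
    exact Real.log_nonneg (by exact_mod_cast hb)
  · exact Real.log_le_log (by exact_mod_cast h) (by exact_mod_cast hab)

theorem tendsto_logbound (c : ℝ) :
    Filter.Tendsto (fun n : ℕ => (c + 2 * Real.log ((n : ℝ) + 1)) / n)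
      Filter.atTop (nhds 0) := by
  have hlog : Filter.Tendsto (fun x : ℝ => Real.log x / x) Filter.atTop (nhds 0) :=
    Real.isLittleO_log_id_atTop.tendsto_div_nhds_zero
  have hcomp : Filter.Tendsto (fun n : ℕ => Real.log ((n : ℝ) + 1) / ((n : ℝ) + 1))
      Filter.atTop (nhds 0) := by
    apply hlog.comp
    apply Filter.tendsto_atTop_add_const_right
    exact tendsto_natCast_atTop_atTop
  have hconst : Filter.Tendsto (fun n : ℕ => c / (n : ℝ)) Filter.atTop (nhds 0) :=
    tendsto_const_div_atTop_nhds_zero_nat c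
  have hg : Filter.Tendsto (fun n : ℕ => 4 * (Real.log ((n : ℝ) + 1) / ((n : ℝ) + 1)))
      Filter.atTop (nhds 0) := by
    have := hcomp.const_mul (4 : ℝ)
    simpa using this
  have hmain : Filter.Tendsto (fun n : ℕ => 2 * Real.log ((n : ℝ) + 1) / (n : ℝ))
      Filter.atTop (nhds 0) := by
    apply squeeze_zero' ?_ ?_ hg
    · apply Filter.Eventually.of_forall
      intro n
      have hl : 0 ≤ Real.log ((n : ℝ) + 1) := Real.log_nonneg (by
        have : (0:ℝ) ≤ n := Nat.cast_nonneg n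
        linarith)
      apply div_nonneg (by linarith) (Nat.cast_nonneg n)
    · rw [Filter.eventually_atTop]
      refine ⟨1, fun n hn => ?_⟩
      have hn1 : (1:ℝ) ≤ n := by exact_mod_cast hn
      have hl : 0 ≤ Real.log ((n : ℝ) + 1) := Real.log_nonneg (by linarith)
      have he : 4 * (Real.log ((n : ℝ) + 1) / ((n : ℝ) + 1)) =
          4 * Real.log ((n : ℝ) + 1) / ((n : ℝ) + 1) := by ring
      rw [he, div_le_div_iff₀ (by linarith) (by linarith)]
      nlinarith
  have hsum := hconst.add hmain
  simp only [add_zero] at hsum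
  have heq : (fun n : ℕ => (c + 2 * Real.log ((n : ℝ) + 1)) / n) =
      (fun n : ℕ => c / n + 2 * Real.log ((n : ℝ) + 1) / n) := by
    funext n
    rw [add_div]
  rw [heq]
  exact hsum

theorem seqEntropyOfCover_zero (U : Finset (Set {a : Amb // a ∈ XS 𝒞}))
    (hU : IsFiniteOpenCover U) : seqEntropyOfCover (TX 𝒞) id U = 0 := by
  obtain ⟨Kd, hKd⟩ := coverNum_upper 𝒞 U hU
  set Kc := U.card + 1 + Kd + U.card * U.card with hKc
  have hKc1 : 1 ≤ Kc := by omega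
  have hbound : ∀ n : ℕ,
      coverNum (preRefine (fun i => (TX 𝒞)^[id i]) n U) ≤ Kc * (n + 1) ^ 2 := by
    intro n
    have h0 := hKd n
    have hidfun : (fun i => (TX 𝒞)^[id i]) = (fun i => (TX 𝒞)^[i]) := rfl
    rw [hidfun]
    have hsq : (n + 1) ^ 2 = (n + 1) * (n + 1) := by ring
    have h1 : n * n ≤ (n + 1) ^ 2 := by rw [hsq]; nlinarith
    have h2 : n + 1 ≤ (n + 1) ^ 2 := by rw [hsq]; nlinarith
    have h3 : 1 ≤ (n + 1) ^ 2 := by rw [hsq]; nlinarith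
    calc coverNum (preRefine (fun i => (TX 𝒞)^[i]) n U)
        ≤ U.card + (n * n + Kd) + U.card * U.card * (n + 1) := h0
      _ ≤ U.card * (n + 1) ^ 2 + (1 * (n + 1) ^ 2 + Kd * (n + 1) ^ 2) +
          U.card * U.card * (n + 1) ^ 2 := by
          have e1 : U.card ≤ U.card * (n + 1) ^ 2 := Nat.le_mul_of_pos_right _ (by omega)
          have e2 : Kd ≤ Kd * (n + 1) ^ 2 := Nat.le_mul_of_pos_right _ (by omega)
          have e3 : U.card * U.card * (n + 1) ≤ U.card * U.card * (n + 1) ^ 2 :=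
            Nat.mul_le_mul_left _ h2
          omega
      _ = Kc * (n + 1) ^ 2 := by rw [hKc]; ring
  unfold seqEntropyOfCover
  apply le_antisymm _ zero_le
  have hev : (fun n : ℕ => ENNReal.ofReal
        (Real.log (coverNum (preRefine (fun i => (TX 𝒞)^[id i]) n U) : ℝ) / (n : ℝ)))
      ≤ᶠ[Filter.atTop]
      (fun n : ℕ => ENNReal.ofReal ((Real.log Kc + 2 * Real.log ((n : ℝ) + 1)) / n)) := by
    apply Filter.Eventually.of_forall
    intro n
    apply ENNReal.ofReal_le_ofReal
    rcases Nat.eq_zero_or_pos n with h0 | hpos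
    · subst h0
      simp
    · have hnn : (0:ℝ) < n := by exact_mod_cast hpos
      rw [div_le_div_iff_of_pos_right]
      rotate_left
      · exact hnn
      have hb := hbound n
      have hKcpos : (0:ℝ) < Kc := by exact_mod_cast hKc1
      have hle : Real.log (coverNum (preRefine (fun i => (TX 𝒞)^[id i]) n U) : ℝ) ≤
          Real.log ((Kc * (n + 1) ^ 2 : ℕ) : ℝ) := by
        apply log_nat_mono hb
        have h1 : 1 ≤ (n + 1) ^ 2 := Nat.one_le_pow _ _ (by omega)
        calc 1 ≤ 1 * 1 := by omega
          _ ≤ Kc * (n + 1) ^ 2 := Nat.mul_le_mul hKc1 h1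
      have heq : ((Kc * (n + 1) ^ 2 : ℕ) : ℝ) = (Kc : ℝ) * ((n : ℝ) + 1) ^ 2 := by
        push_cast
        ring
      rw [heq, Real.log_mul (ne_of_gt hKcpos) (by positivity), Real.log_pow] at hle
      have : ((2 : ℕ) : ℝ) * Real.log ((n : ℝ) + 1) = 2 * Real.log ((n : ℝ) + 1) := by
        norm_num
      rw [this] at hle
      exact hle
  have hlim : Filter.Tendsto
      (fun n : ℕ => ENNReal.ofReal ((Real.log Kc + 2 * Real.log ((n : ℝ) + 1)) / n))
      Filter.atTop (nhds 0) := by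
    have h1 := tendsto_logbound (Real.log Kc)
    have h2 := (ENNReal.continuous_ofReal.tendsto 0).comp h1
    simpa [Function.comp_def] using h2
  calc Filter.limsup (fun n : ℕ => ENNReal.ofReal
        (Real.log (coverNum (preRefine (fun i => (TX 𝒞)^[id i]) n U) : ℝ) / (n : ℝ)))
        Filter.atTop
      ≤ Filter.limsup
        (fun n : ℕ => ENNReal.ofReal ((Real.log Kc + 2 * Real.log ((n : ℝ) + 1)) / n))
        Filter.atTop := Filter.limsup_le_limsup hev
    _ = 0 := hlim.limsup_eq

theorem topEntropy_zero : topEntropy (TX 𝒞) = 0 := by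
  unfold topEntropy seqEntropy
  apply le_antisymm _ zero_le
  apply iSup₂_le
  intro U hU
  exact le_of_eq (seqEntropyOfCover_zero 𝒞 U hU)

end Construction

end S13

universe u

/-- The space `X` is compact and carries a continuous map `T` which is the identity on a
subset `C0` homeomorphic to `𝒞`, whose complement is the injective orbit of a point `x1`,
with `h(T) = 0` and `h*(T) = ∞`. -/
def Stmt13Prop (𝒞 : Type u) [MetricSpace 𝒞] (X : Type) [MetricSpace X] : Prop :=
  CompactSpace X ∧
  ∃ (T : X → X) (C0 : Set X) (x1 : X),
    Continuous T ∧
    Nonempty (↥C0 ≃ₜ 𝒞) ∧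
    Function.Injective (fun n : ℕ => T^[n] x1) ∧
    Disjoint C0 (Set.range fun n : ℕ => T^[n] x1) ∧
    (C0 ∪ Set.range (fun n : ℕ => T^[n] x1) = Set.univ) ∧
    (∀ y ∈ C0, T y = y) ∧
    topEntropy T = 0 ∧
    supSeqEntropy T = ⊤

/-- For every nondegenerate metric continuum `𝒞` there is a compact metric space which
differs from a copy of `𝒞` by one injective orbit only, carrying a continuous map with
zero topological entropy but infinite supremum topological sequence entropy. -/
theorem statement13 (𝒞 : Type u) [m𝒞 : MetricSpace 𝒞] [CompactSpace 𝒞] [ConnectedSpace 𝒞]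
    [Nontrivial 𝒞] :
    ∃ (X : Type) (mX : MetricSpace X), @Stmt13Prop 𝒞 m𝒞 X mX := by
  refine ⟨{a : S13.Amb // a ∈ S13.XS 𝒞}, inferInstance, ?_⟩
  constructor
  · exact S13.compactSpace_X 𝒞
  · exact ⟨S13.TX 𝒞, S13.C0set 𝒞, S13.xpt 𝒞 0, S13.continuous_TX 𝒞, S13.homeo_C0 𝒞,
      S13.inj_orbit 𝒞, S13.disjoint_C0_orbit 𝒞, S13.union_C0_orbit 𝒞, S13.TX_fixes_C0 𝒞,
      S13.topEntropy_zero 𝒞, S13.supSeqEntropy_top 𝒞⟩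
end
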